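/- arXiv:2406.15670 — 7 statements merged into one kernel-verified Lean document; each statement's English description precedes it below -/
import Mathlib

section
/- Let {χ_γ}_{γ∈Γ} be a localized frame in ℋ with constant G ≥ 1 and rate λ > 0, and let S be its frame operator. Then for every p ∈ ℕ there exist constants 0 < λ_p < λ and a_p > 0 such that |⟨χ_γ, S^{-p} χ_{γ'}⟩| ≤ a_p · exp(−λ_p · d(γ,γ')) for all γ, γ' ∈ Γ, where S^{-p} := (S^{-1})^p. -/
/-!
With `T = 1 - c S`, the lower frame bound gives `‖T‖ ≤ r < 1` for a suitable `c > 0`, so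
`S⁻¹ ψ = ∑ₙ Tⁿ (c ψ)`. If the frame coefficients of `ψ` decay like `C exp(-η d(·, γ'))` with
`η ≤ λ/2`, one application of `S` keeps this decay at the cost of a factor `G m_{λ/2}` (split
`exp(-λ d(γ, ξ))` by the triangle inequality and sum over `ξ`), so the coefficients of `Tⁿ (c ψ)`
are bounded both by `C Kⁿ exp(-η d)` and by `rⁿ ‖c ψ‖`. The weighted geometric mean of the two
bounds, with `θ` so small that `r^(1-θ) K^θ < 1`, is summable in `n` and still decays, at rate
`θ η`. Applying this `p` times to `χ_γ'` gives the rate `θ^p λ/2`.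
-/

open Topology

open scoped InnerProductSpace

theorem le_rpow_mul_rpow_of_le_of_le {x a b θ : ℝ} (hx : 0 ≤ x) (ha : x ≤ a) (hb : x ≤ b)
    (hθ₀ : 0 ≤ θ) (hθ₁ : θ ≤ 1) : x ≤ a ^ (1 - θ) * b ^ θ :=
  calc x = x ^ (1 - θ) * x ^ θ := by
        rw [← Real.rpow_add' hx (by norm_num), sub_add_cancel, Real.rpow_one]
    _ ≤ a ^ (1 - θ) * b ^ θ :=
        mul_le_mul (Real.rpow_le_rpow hx ha (by linarith)) (Real.rpow_le_rpow hx hb hθ₀)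
          (by positivity) (Real.rpow_nonneg (hx.trans ha) _)

theorem exists_pos_rpow_mul_rpow_lt_one {r K : ℝ} (hr : r < 1) (hK : 0 < K) :
    ∃ θ : ℝ, 0 < θ ∧ θ ≤ 1 ∧ r ^ (1 - θ) * K ^ θ < 1 := by
  have hcont : ContinuousAt (fun θ : ℝ => r ^ (1 - θ) * K ^ θ) 0 :=
    (continuousAt_const.rpow (continuousAt_const.sub continuousAt_id) (by norm_num)).mul
      (continuousAt_const.rpow continuousAt_id (Or.inl hK.ne'))
  have hlt : ∀ᶠ θ in 𝓝 (0 : ℝ), r ^ (1 - θ) * K ^ θ < 1 :=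
    hcont.eventually_lt continuousAt_const (by simpa using hr)
  obtain ⟨θ, hθ, hθ₀, hθ₁⟩ :=
    ((hlt.filter_mono nhdsWithin_le_nhds).and (Ioc_mem_nhdsGT one_pos)).exists
  exact ⟨θ, hθ₀, hθ₁, hθ⟩

theorem norm_le_of_hasSum_of_le_geometric {E : Type*} [NormedAddCommGroup E] {f : ℕ → E}
    {s : E} {a b r K θ : ℝ} (hf : HasSum f s) (ha : ∀ n, ‖f n‖ ≤ a * r ^ n)
    (hb : ∀ n, ‖f n‖ ≤ b * K ^ n) (hr : 0 ≤ r) (hK : 0 ≤ K) (hθ₀ : 0 ≤ θ) (hθ₁ : θ ≤ 1)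
    (hρ : r ^ (1 - θ) * K ^ θ < 1) :
    ‖s‖ ≤ a ^ (1 - θ) * b ^ θ / (1 - r ^ (1 - θ) * K ^ θ) := by
  have ha₀ : 0 ≤ a := by simpa using (norm_nonneg _).trans (ha 0)
  have hb₀ : 0 ≤ b := by simpa using (norm_nonneg _).trans (hb 0)
  have hterm (n : ℕ) : ‖f n‖ ≤ a ^ (1 - θ) * b ^ θ * (r ^ (1 - θ) * K ^ θ) ^ n :=
    calc ‖f n‖ ≤ (a * r ^ n) ^ (1 - θ) * (b * K ^ n) ^ θ :=
          le_rpow_mul_rpow_of_le_of_le (norm_nonneg _) (ha n) (hb n) hθ₀ hθ₁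
      _ = a ^ (1 - θ) * b ^ θ * (r ^ (1 - θ) * K ^ θ) ^ n := by
          rw [Real.mul_rpow ha₀ (by positivity), Real.mul_rpow hb₀ (by positivity),
            ← Real.rpow_pow_comm hr, ← Real.rpow_pow_comm hK, mul_pow]
          ring
  have hgeom := (hasSum_geometric_of_lt_one (by positivity) hρ).mul_left (a ^ (1 - θ) * b ^ θ)
  rw [← hf.tsum_eq, div_eq_mul_inv]
  exact tsum_of_norm_bounded hgeom hterm

theorem ContinuousLinearEquiv.hasSum_pow_one_sub_smul_apply {𝕜 E : Type*}
    [NontriviallyNormedField 𝕜] [NormedAddCommGroup E] [NormedSpace 𝕜 E] [CompleteSpace E]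
    (S : E ≃L[𝕜] E) {c : 𝕜} (h : ‖1 - c • (S : E →L[𝕜] E)‖ < 1) (x : E) :
    HasSum (fun n : ℕ => ((1 - c • (S : E →L[𝕜] E)) ^ n) (c • x)) (S.symm x) := by
  set T := 1 - c • (S : E →L[𝕜] E)
  have hinv : (∑' n : ℕ, T ^ n) * (c • (S : E →L[𝕜] E)) = 1 := by
    simpa [T] using geom_series_mul_neg T h
  have hx : (∑' n : ℕ, T ^ n) (c • x) = S.symm x := by
    simpa using congr($hinv (S.symm x))
  rw [← hx]
  exact (summable_geometric_of_norm_lt_one h).hasSum.mapL (ContinuousLinearMap.apply 𝕜 E (c • x))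

theorem ContinuousLinearMap.norm_pow_apply_le {𝕜 E : Type*} [NontriviallyNormedField 𝕜]
    [SeminormedAddCommGroup E] [NormedSpace 𝕜 E] (T : E →L[𝕜] E) (n : ℕ) (x : E) :
    ‖(T ^ n) x‖ ≤ ‖T‖ ^ n * ‖x‖ := by
  induction n with
  | zero => simp
  | succ n ih =>
    rw [pow_succ', mul_apply_eq_comp, pow_succ', mul_assoc]
    exact T.le_opNorm_of_le ih

theorem exp_neg_mul_dist_mul_exp_neg_mul_dist_le {X : Type*} [PseudoMetricSpace X] {η lam : ℝ}
    (hη : 0 ≤ η) (hηlam : η ≤ lam / 2) (x y z : X) :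
    Real.exp (-lam * dist x y) * Real.exp (-η * dist y z)
      ≤ Real.exp (-η * dist x z) * Real.exp (-(lam / 2) * dist x y) := by
  rw [← Real.exp_add, ← Real.exp_add, Real.exp_le_exp]
  have hxz := mul_le_mul_of_nonneg_left (dist_triangle x y z) hη
  nlinarith [dist_nonneg (x := x) (y := y)]

section InnerProductSpace

variable {𝕜 H : Type*} [RCLike 𝕜] [NormedAddCommGroup H] [InnerProductSpace 𝕜 H]

theorem exists_norm_one_sub_smul_lt_one_of_coercive {S : H →L[𝕜] H} {a : ℝ} (ha : 0 < a)
    (hS : ∀ ψ, a * ‖ψ‖ ^ 2 ≤ RCLike.re ⟪ψ, S ψ⟫_𝕜) :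
    ∃ c : ℝ, 0 < c ∧ ‖1 - (c : 𝕜) • S‖ < 1 := by
  set M := ‖S‖ + a
  have hM : 0 < M := by positivity
  have haM : (a / M) ^ 2 ≤ 1 := pow_le_one₀ (by positivity) ((div_le_one hM).mpr (by simp [M]))
  set q := Real.sqrt (1 - (a / M) ^ 2)
  refine ⟨a / M ^ 2, by positivity, lt_of_le_of_lt ?_ (show q < 1 from ?_)⟩
  · refine ContinuousLinearMap.opNorm_le_bound _ (Real.sqrt_nonneg _) fun ψ => ?_
    have hSψ : ‖S ψ‖ ^ 2 ≤ M ^ 2 * ‖ψ‖ ^ 2 := by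
      rw [← mul_pow]
      exact pow_le_pow_left₀ (norm_nonneg _)
        ((S.le_opNorm ψ).trans (mul_le_mul_of_nonneg_right (by simp [M, ha.le]) (norm_nonneg ψ))) 2
    have hsq : ‖ψ - ((a / M ^ 2 : ℝ) : 𝕜) • S ψ‖ ^ 2 ≤ (1 - (a / M) ^ 2) * ‖ψ‖ ^ 2 := by
      rw [@norm_sub_sq 𝕜, inner_smul_right, RCLike.re_ofReal_mul, norm_smul, RCLike.norm_ofReal,
        abs_of_pos (by positivity)]
      have h1 := mul_le_mul_of_nonneg_left (hS ψ) (show 0 ≤ a / M ^ 2 by positivity)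
      have h2 := mul_le_mul_of_nonneg_left hSψ (show 0 ≤ (a / M ^ 2) ^ 2 by positivity)
      have e1 : (a / M ^ 2) ^ 2 * (M ^ 2 * ‖ψ‖ ^ 2) = a / M ^ 2 * (a * ‖ψ‖ ^ 2) := by
        field_simp
      have e2 : (1 - (a / M) ^ 2) * ‖ψ‖ ^ 2 = ‖ψ‖ ^ 2 - a / M ^ 2 * (a * ‖ψ‖ ^ 2) := by
        field_simp
      rw [mul_pow, e2]
      linarith
    rw [← pow_le_pow_iff_left₀ (norm_nonneg _) (by positivity) two_ne_zero, mul_pow,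
      Real.sq_sqrt (sub_nonneg.mpr haM)]
    simpa using hsq
  · rw [Real.sqrt_lt' one_pos]
    have : 0 < a / M := by positivity
    nlinarith

variable {Γ : Type*} {χ : Γ → H}

theorem hasSum_inner_mul_inner_of_hasSum {S : H → H}
    (hS : ∀ ψ, HasSum (fun γ => ⟪χ γ, ψ⟫_𝕜 • χ γ) (S ψ)) (φ ψ : H) :
    HasSum (fun ξ => ⟪χ ξ, ψ⟫_𝕜 * ⟪φ, χ ξ⟫_𝕜) ⟪φ, S ψ⟫_𝕜 := by
  simpa [inner_smul_right, mul_comm] using (hS ψ).mapL (innerSL 𝕜 φ)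

theorem hasSum_norm_inner_sq_of_hasSum {S : H → H}
    (hS : ∀ ψ, HasSum (fun γ => ⟪χ γ, ψ⟫_𝕜 • χ γ) (S ψ)) (ψ : H) :
    HasSum (fun ξ => ‖⟪χ ξ, ψ⟫_𝕜‖ ^ 2) (RCLike.re ⟪ψ, S ψ⟫_𝕜) := by
  have hre := (hasSum_inner_mul_inner_of_hasSum hS ψ ψ).mapL RCLike.reCLM
  refine hre.congr_fun fun ξ => ?_
  rw [RCLike.reCLM_apply, ← inner_conj_symm, RCLike.conj_mul, RCLike.norm_conj, ← RCLike.ofReal_pow,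
    RCLike.ofReal_re]

variable [PseudoMetricSpace Γ] {G lam m : ℝ}

theorem norm_inner_apply_le_of_decay {S : H → H}
    (hS : ∀ ψ, HasSum (fun γ => ⟪χ γ, ψ⟫_𝕜 • χ γ) (S ψ))
    (hloc : ∀ γ γ' : Γ, ‖⟪χ γ, χ γ'⟫_𝕜‖ ≤ G * Real.exp (-lam * dist γ γ')) (hG : 0 ≤ G)
    (hm : ∀ γ : Γ, ∃ s, s ≤ m ∧ HasSum (fun ξ => Real.exp (-(lam / 2) * dist γ ξ)) s)
    {ψ : H} {γ' : Γ} {C η : ℝ} (hη : 0 ≤ η) (hηlam : η ≤ lam / 2)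
    (hψ : ∀ ξ, ‖⟪χ ξ, ψ⟫_𝕜‖ ≤ C * Real.exp (-η * dist ξ γ')) (γ : Γ) :
    ‖⟪χ γ, S ψ⟫_𝕜‖ ≤ C * (G * m) * Real.exp (-η * dist γ γ') := by
  have hC : 0 ≤ C := by simpa using (norm_nonneg _).trans (hψ γ')
  obtain ⟨s, hsm, hs⟩ := hm γ
  set e := Real.exp (-η * dist γ γ')
  have hterm (ξ : Γ) : ‖⟪χ ξ, ψ⟫_𝕜 * ⟪χ γ, χ ξ⟫_𝕜‖
      ≤ C * G * e * Real.exp (-(lam / 2) * dist γ ξ) := by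
    rw [norm_mul]
    calc _ ≤ C * Real.exp (-η * dist ξ γ') * (G * Real.exp (-lam * dist γ ξ)) :=
          mul_le_mul (hψ ξ) (hloc γ ξ) (norm_nonneg _) (by positivity)
      _ = C * G * (Real.exp (-lam * dist γ ξ) * Real.exp (-η * dist ξ γ')) := by ring
      _ ≤ C * G * (e * Real.exp (-(lam / 2) * dist γ ξ)) :=
          mul_le_mul_of_nonneg_left
            (exp_neg_mul_dist_mul_exp_neg_mul_dist_le hη hηlam γ ξ γ') (by positivity)
      _ = _ := by ring
  have hsum := tsum_of_norm_bounded (hs.mul_left (C * G * e)) hterm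
  rw [(hasSum_inner_mul_inner_of_hasSum hS (χ γ) ψ).tsum_eq] at hsum
  calc _ ≤ C * G * e * s := hsum
    _ ≤ C * G * e * m := by gcongr
    _ = _ := by ring

theorem norm_inner_pow_one_sub_smul_apply_le {S : H →L[𝕜] H}
    (hS : ∀ ψ, HasSum (fun γ => ⟪χ γ, ψ⟫_𝕜 • χ γ) (S ψ))
    (hloc : ∀ γ γ' : Γ, ‖⟪χ γ, χ γ'⟫_𝕜‖ ≤ G * Real.exp (-lam * dist γ γ')) (hG : 0 ≤ G)
    (hm : ∀ γ : Γ, ∃ s, s ≤ m ∧ HasSum (fun ξ => Real.exp (-(lam / 2) * dist γ ξ)) s)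
    {c : ℝ} (hc : 0 ≤ c) {ψ : H} {γ' : Γ} {C η : ℝ} (hη : 0 ≤ η) (hηlam : η ≤ lam / 2)
    (hψ : ∀ ξ, ‖⟪χ ξ, ψ⟫_𝕜‖ ≤ C * Real.exp (-η * dist ξ γ')) (n : ℕ) (γ : Γ) :
    ‖⟪χ γ, ((1 - (c : 𝕜) • S) ^ n) ψ⟫_𝕜‖
      ≤ C * (1 + c * (G * m)) ^ n * Real.exp (-η * dist γ γ') := by
  induction n generalizing γ with
  | zero => simpa using hψ γ
  | succ n ih =>
    set φ := ((1 - (c : 𝕜) • S) ^ n) ψ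
    have hSφ := norm_inner_apply_le_of_decay hS hloc hG hm hη hηlam ih γ
    have hnorm_smul (z : 𝕜) : ‖(c : 𝕜) * z‖ = c * ‖z‖ := by
      rw [norm_mul, RCLike.norm_ofReal, abs_of_nonneg hc]
    calc ‖⟪χ γ, ((1 - (c : 𝕜) • S) ^ (n + 1)) ψ⟫_𝕜‖ = ‖⟪χ γ, φ⟫_𝕜 - c * ⟪χ γ, S φ⟫_𝕜‖ := by
          rw [pow_succ', mul_apply_eq_comp, sub_apply,
            one_apply_eq_self, smul_apply, inner_sub_right, inner_smul_right]
      _ ≤ ‖⟪χ γ, φ⟫_𝕜‖ + c * ‖⟪χ γ, S φ⟫_𝕜‖ := by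
          rw [← hnorm_smul]
          exact norm_sub_le _ _
      _ ≤ C * (1 + c * (G * m)) ^ n * Real.exp (-η * dist γ γ')
          + c * (C * (1 + c * (G * m)) ^ n * (G * m) * Real.exp (-η * dist γ γ')) :=
          add_le_add (ih γ) (mul_le_mul_of_nonneg_left hSφ hc)
      _ = _ := by ring

theorem norm_inner_symm_apply_le [CompleteSpace H] {S : H ≃L[𝕜] H}
    (hS : ∀ ψ, HasSum (fun γ => ⟪χ γ, ψ⟫_𝕜 • χ γ) (S ψ)) (hnorm : ∀ γ, ‖χ γ‖ ≤ 1)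
    (hloc : ∀ γ γ' : Γ, ‖⟪χ γ, χ γ'⟫_𝕜‖ ≤ G * Real.exp (-lam * dist γ γ')) (hG : 0 ≤ G)
    (hm : ∀ γ : Γ, ∃ s, s ≤ m ∧ HasSum (fun ξ => Real.exp (-(lam / 2) * dist γ ξ)) s)
    {c r θ : ℝ} (hc : 0 ≤ c) (hTr : ‖1 - (c : 𝕜) • (S : H →L[𝕜] H)‖ ≤ r) (hr : r < 1)
    (hθ₀ : 0 ≤ θ) (hθ₁ : θ ≤ 1) (hρ : r ^ (1 - θ) * (1 + c * (G * m)) ^ θ < 1)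
    {ψ : H} {γ' : Γ} {C D η : ℝ} (hη : 0 ≤ η) (hηlam : η ≤ lam / 2) (hD : ‖ψ‖ ≤ D)
    (hψ : ∀ ξ, ‖⟪χ ξ, ψ⟫_𝕜‖ ≤ C * Real.exp (-η * dist ξ γ')) (γ : Γ) :
    ‖⟪χ γ, S.symm ψ⟫_𝕜‖ ≤ (c * D) ^ (1 - θ) * (c * C) ^ θ
      / (1 - r ^ (1 - θ) * (1 + c * (G * m)) ^ θ) * Real.exp (-(θ * η) * dist γ γ') := by
  set T := 1 - (c : 𝕜) • (S : H →L[𝕜] H)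
  have hC : 0 ≤ C := by simpa using (norm_nonneg _).trans (hψ γ')
  have hm₀ : 0 ≤ m := by
    obtain ⟨s, hsm, hs⟩ := hm γ
    exact (hs.nonneg fun _ => (Real.exp_pos _).le).trans hsm
  have hsum : HasSum (fun n => ⟪χ γ, (T ^ n) ((c : 𝕜) • ψ)⟫_𝕜) ⟪χ γ, S.symm ψ⟫_𝕜 :=
    (S.hasSum_pow_one_sub_smul_apply (hTr.trans_lt hr) ψ).mapL (innerSL 𝕜 (χ γ))
  have hcψ (ξ : Γ) : ‖⟪χ ξ, (c : 𝕜) • ψ⟫_𝕜‖ ≤ c * C * Real.exp (-η * dist ξ γ') := by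
    rw [inner_smul_right, norm_mul, RCLike.norm_ofReal, abs_of_nonneg hc, mul_assoc]
    exact mul_le_mul_of_nonneg_left (hψ ξ) hc
  have hsmall (n : ℕ) : ‖⟪χ γ, (T ^ n) ((c : 𝕜) • ψ)⟫_𝕜‖ ≤ c * D * r ^ n :=
    calc _ ≤ ‖χ γ‖ * (‖T‖ ^ n * ‖(c : 𝕜) • ψ‖) := by
          grw [norm_inner_le_norm, T.norm_pow_apply_le]
      _ ≤ 1 * (r ^ n * (c * D)) := by
          rw [norm_smul, RCLike.norm_ofReal, abs_of_nonneg hc]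
          have hr₀ : 0 ≤ r := (norm_nonneg _).trans hTr
          grw [hnorm γ, hTr, hD]
      _ = c * D * r ^ n := by ring
  have hdecay (n : ℕ) : ‖⟪χ γ, (T ^ n) ((c : 𝕜) • ψ)⟫_𝕜‖
      ≤ c * C * Real.exp (-η * dist γ γ') * (1 + c * (G * m)) ^ n := by
    grw [norm_inner_pow_one_sub_smul_apply_le hS hloc hG hm hc hη hηlam hcψ n γ]
    exact le_of_eq (by ring)
  grw [norm_le_of_hasSum_of_le_geometric hsum hsmall hdecay ((norm_nonneg _).trans hTr)
    (by positivity) hθ₀ hθ₁ hρ]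
  rw [Real.mul_rpow (by positivity) (Real.exp_pos _).le, ← Real.exp_mul]
  exact le_of_eq (by ring_nf)

theorem exists_norm_inner_symm_pow_apply_le [CompleteSpace H] {S : H ≃L[𝕜] H}
    (hS : ∀ ψ, HasSum (fun γ => ⟪χ γ, ψ⟫_𝕜 • χ γ) (S ψ)) (hnorm : ∀ γ, ‖χ γ‖ ≤ 1)
    (hloc : ∀ γ γ' : Γ, ‖⟪χ γ, χ γ'⟫_𝕜‖ ≤ G * Real.exp (-lam * dist γ γ')) (hG : 0 ≤ G)
    (hlam : 0 ≤ lam)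
    (hm : ∀ γ : Γ, ∃ s, s ≤ m ∧ HasSum (fun ξ => Real.exp (-(lam / 2) * dist γ ξ)) s)
    {c r θ : ℝ} (hc : 0 ≤ c) (hTr : ‖1 - (c : 𝕜) • (S : H →L[𝕜] H)‖ ≤ r) (hr : r < 1)
    (hθ₀ : 0 ≤ θ) (hθ₁ : θ ≤ 1) (hρ : r ^ (1 - θ) * (1 + c * (G * m)) ^ θ < 1) (q : ℕ) :
    ∃ C, 0 ≤ C ∧ ∀ γ γ', ‖⟪χ γ, ((S.symm : H →L[𝕜] H) ^ q) (χ γ')⟫_𝕜‖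
      ≤ C * Real.exp (-(θ ^ q * (lam / 2)) * dist γ γ') := by
  induction q with
  | zero =>
    refine ⟨G, hG, fun γ γ' => (hloc γ γ').trans ?_⟩
    rw [pow_zero, one_mul]
    gcongr
    nlinarith [dist_nonneg (x := γ) (y := γ')]
  | succ q ih =>
    obtain ⟨C, hC, hCq⟩ := ih
    set D := ‖(S.symm : H →L[𝕜] H) ^ q‖
    refine ⟨(c * D) ^ (1 - θ) * (c * C) ^ θ / (1 - r ^ (1 - θ) * (1 + c * (G * m)) ^ θ),
      div_nonneg (mul_nonneg (Real.rpow_nonneg (mul_nonneg hc (norm_nonneg _)) _)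
        (Real.rpow_nonneg (mul_nonneg hc hC) _)) (sub_nonneg.mpr hρ.le), fun γ γ' => ?_⟩
    rw [pow_succ' (S.symm : H →L[𝕜] H), mul_apply_eq_comp, pow_succ' θ, mul_assoc]
    refine norm_inner_symm_apply_le hS hnorm hloc hG hm hc hTr hr hθ₀ hθ₁ hρ (by positivity)
      ?_ ?_ (fun ξ => hCq ξ γ') γ
    · exact mul_le_of_le_one_left (by positivity) (pow_le_one₀ hθ₀ hθ₁)
    · exact ((S.symm : H →L[𝕜] H) ^ q).le_opNorm_of_le (hnorm γ') |>.trans (by simp [D])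

end InnerProductSpace

theorem stmt_0_general
    {H : Type*} [NormedAddCommGroup H] [InnerProductSpace ℂ H] [CompleteSpace H]
    {Γ : Type*} [MetricSpace Γ]
    (hm : ∀ ε : ℝ, 0 < ε → ∃ C : ℝ, ∀ γ : Γ,
      ∃ s : ℝ, s ≤ C ∧ HasSum (fun ξ : Γ => Real.exp (-ε * dist γ ξ)) s)
    (χ : Γ → H) (A B : ℝ) (hA : 0 < A)
    (hframe : ∀ ψ : H, ∃ s : ℝ,
      HasSum (fun γ : Γ => ‖(inner ℂ (χ γ) ψ : ℂ)‖ ^ 2) s ∧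
        A * ‖ψ‖ ^ 2 ≤ s ∧ s ≤ B * ‖ψ‖ ^ 2)
    (S : H ≃L[ℂ] H)
    (hS : ∀ ψ : H, HasSum (fun γ : Γ => (inner ℂ (χ γ) ψ : ℂ) • χ γ) (S ψ))
    (G lam : ℝ) (hG : 1 ≤ G) (hlam : 0 < lam)
    (hnorm : ∀ γ : Γ, ‖χ γ‖ = 1)
    (hloc : ∀ γ γ' : Γ, ‖(inner ℂ (χ γ) (χ γ') : ℂ)‖ ≤ G * Real.exp (-lam * dist γ γ')) :
    ∀ p : ℕ, 1 ≤ p → ∃ lamp ap : ℝ, 0 < lamp ∧ lamp < lam ∧ 0 < ap ∧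
      ∀ γ γ' : Γ, ‖(inner ℂ (χ γ) (((S.symm : H →L[ℂ] H) ^ p) (χ γ')) : ℂ)‖
        ≤ ap * Real.exp (-lamp * dist γ γ') := by
  intro p _
  have hcoer (ψ : H) : A * ‖ψ‖ ^ 2 ≤ RCLike.re ⟪ψ, (S : H →L[ℂ] H) ψ⟫_ℂ := by
    obtain ⟨s, hs, hAs, -⟩ := hframe ψ
    rwa [hs.unique (hasSum_norm_inner_sq_of_hasSum hS ψ)] at hAs
  obtain ⟨c, hc, hT⟩ := exists_norm_one_sub_smul_lt_one_of_coercive hA hcoer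
  obtain ⟨r, hTr, hr⟩ := exists_between hT
  obtain ⟨m, hm⟩ := hm (lam / 2) (by positivity)
  have hm' (γ : Γ) : ∃ s, s ≤ max m 0 ∧ HasSum (fun ξ => Real.exp (-(lam / 2) * dist γ ξ)) s :=
    (hm γ).imp fun _ hs => ⟨hs.1.trans (le_max_left _ _), hs.2⟩
  obtain ⟨θ, hθ₀, hθ₁, hρ⟩ :=
    exists_pos_rpow_mul_rpow_lt_one (K := 1 + c * (G * max m 0)) hr (by positivity)
  obtain ⟨C, hC, hbound⟩ := exists_norm_inner_symm_pow_apply_le hS (fun γ => (hnorm γ).le)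
    hloc (by linarith) hlam.le hm' hc.le hTr.le hr hθ₀.le hθ₁ hρ p
  refine ⟨θ ^ p * (lam / 2), C + 1, by positivity, ?_, by positivity,
    fun γ γ' => (hbound γ γ').trans (by gcongr; linarith)⟩
  calc θ ^ p * (lam / 2) ≤ lam / 2 := mul_le_of_le_one_left (by positivity) (pow_le_one₀ hθ₀.le hθ₁)
    _ < lam := half_lt_self hlam

/-- If `{χ_γ}` is a localized frame with constant `G ≥ 1` and rate `λ > 0`
on a countable metric space `Γ` with `m_ε < ∞` for all `ε > 0`, and `S` is its frame
operator, then for every `p ∈ ℕ` there are `0 < λ_p < λ` and `a_p > 0` such that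
`|⟨χ_γ, S^{-p} χ_{γ'}⟩| ≤ a_p exp(-λ_p d(γ,γ'))` for all `γ, γ'`. -/
theorem stmt_0
    {H : Type*} [NormedAddCommGroup H] [InnerProductSpace ℂ H] [CompleteSpace H]
    [TopologicalSpace.SeparableSpace H]
    {Γ : Type*} [Countable Γ] [MetricSpace Γ]
    (hm : ∀ ε : ℝ, 0 < ε → ∃ C : ℝ, ∀ γ : Γ,
      ∃ s : ℝ, s ≤ C ∧ HasSum (fun ξ : Γ => Real.exp (-ε * dist γ ξ)) s)
    (χ : Γ → H) (A B : ℝ) (hA : 0 < A) (hAB : A ≤ B)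
    (hframe : ∀ ψ : H, ∃ s : ℝ,
      HasSum (fun γ : Γ => ‖(inner ℂ (χ γ) ψ : ℂ)‖ ^ 2) s ∧
        A * ‖ψ‖ ^ 2 ≤ s ∧ s ≤ B * ‖ψ‖ ^ 2)
    (S : H ≃L[ℂ] H)
    (hS : ∀ ψ : H, HasSum (fun γ : Γ => (inner ℂ (χ γ) ψ : ℂ) • χ γ) (S ψ))
    (G lam : ℝ) (hG : 1 ≤ G) (hlam : 0 < lam)
    (hnorm : ∀ γ : Γ, ‖χ γ‖ = 1)
    (hloc : ∀ γ γ' : Γ, ‖(inner ℂ (χ γ) (χ γ') : ℂ)‖ ≤ G * Real.exp (-lam * dist γ γ')) :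
    ∀ p : ℕ, 1 ≤ p → ∃ lamp ap : ℝ, 0 < lamp ∧ lamp < lam ∧ 0 < ap ∧
      ∀ γ γ' : Γ, ‖(inner ℂ (χ γ) (((S.symm : H →L[ℂ] H) ^ p) (χ γ')) : ℂ)‖
        ≤ ap * Real.exp (-lamp * dist γ γ') :=
  stmt_0_general hm χ A B hA hframe S hS G lam hG hlam hnorm hloc
end

section
/- Let {χ_γ}_{γ∈Γ} be a localized frame in ℋ with constant G ≥ 1 and rate λ > 0 and frame operator S, and let a₂ > 0 and 0 < λ₂ < λ be constants such that |⟨χ_γ, S^{-2} χ_{γ'}⟩| ≤ a₂·exp(−λ₂·d(γ,γ')) for all γ,γ'. Let H be a self-adjoint operator on ℋ with dense domain 𝒟(H) such that (i) χ_γ ∈ 𝒟(H) and H χ_γ = E(γ)·χ_γ with E(γ) ∈ ℝ for every γ ∈ Γ, and (ii) S·𝒟(H) ⊆ 𝒟(H). Then S^{-1}χ_{γ'} ∈ 𝒟(H) for all γ', and for all γ,γ' ∈ Γ: ⟨χ_γ, S^{-1} H S^{-1} χ_{γ'}⟩ = 0 whenever E(γ) ≠ E(γ'), while |⟨χ_γ,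 S^{-1} H S^{-1} χ_{γ'}⟩| ≤ a₂·|E(γ)|·exp(−λ₂·d(γ,γ')) whenever E(γ) = E(γ'). -/
/-!
Each `χ_γ` is an eigenvector of `H`, and eigenvectors of a self-adjoint operator with distinct
eigenvalues are orthogonal. So every term of `S ψ = ∑ ⟨χ_γ, ψ⟩ χ_γ` stays in the (closed)
eigenspace of `ψ`, i.e. `S` leaves each eigenspace invariant. Being symmetric, `S` then also
leaves its orthogonal complement invariant, and an invertible operator preserving both summands
of `K ⊕ Kᗮ` has an inverse preserving `K`. Hence `S⁻¹ χ_γ'` is an eigenvector with eigenvalue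
`E(γ')`, and `⟨χ_γ, S⁻¹ H S⁻¹ χ_γ'⟩ = E(γ') ⟨S⁻¹ χ_γ, S⁻¹ χ_γ'⟩`, which vanishes by
orthogonality when `E(γ) ≠ E(γ')` and equals `E(γ') ⟨χ_γ, S⁻² χ_γ'⟩` in general.
-/

section FrameOperator

variable {𝕜 E ι : Type*} [RCLike 𝕜] [NormedAddCommGroup E] [InnerProductSpace 𝕜 E]
  {χ : ι → E} {S : E →ₗ[𝕜] E}

local notation "⟪" x ", " y "⟫" => inner 𝕜 x y

theorem LinearMap.isSymmetric_of_hasSum_inner_smul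
    (hS : ∀ ψ, HasSum (fun γ => ⟪χ γ, ψ⟫ • χ γ) (S ψ)) : S.IsSymmetric := by
  have expand : ∀ x y : E, HasSum (fun γ => ⟪χ γ, x⟫ * ⟪y, χ γ⟫) ⟪y, S x⟫ := fun x y => by
    simpa only [innerSL_apply_apply, inner_smul_right] using (hS x).mapL (innerSL 𝕜 y)
  intro x y
  have h₁ : HasSum (fun γ => ⟪x, χ γ⟫ * ⟪χ γ, y⟫) ⟪S x, y⟫ := by
    simpa only [RCLike.star_def, map_mul, inner_conj_symm] using (expand x y).star
  have h₂ : HasSum (fun γ => ⟪x, χ γ⟫ * ⟪χ γ, y⟫) ⟪x, S y⟫ := by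
    simpa only [mul_comm] using expand y x
  exact h₁.unique h₂

theorem Submodule.map_mem_of_hasSum_inner_smul {K : Submodule 𝕜 E} (hK : IsClosed (K : Set E))
    (hχ : ∀ γ, χ γ ∈ K ∨ χ γ ∈ Kᗮ) (hS : ∀ ψ, HasSum (fun γ => ⟪χ γ, ψ⟫ • χ γ) (S ψ))
    {x : E} (hx : x ∈ K) : S x ∈ K := by
  rw [← (hS x).tsum_eq]
  refine tsum_mem hK fun γ => ?_
  rcases hχ γ with hγ | hγ
  · exact K.smul_mem _ hγ
  · rw [Submodule.inner_left_of_mem_orthogonal hx hγ, zero_smul]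
    exact K.zero_mem

end FrameOperator

theorem ContinuousLinearEquiv.symm_mem_of_isSymmetric {𝕜 E : Type*} [RCLike 𝕜]
    [NormedAddCommGroup E] [InnerProductSpace 𝕜 E] {K : Submodule 𝕜 E} [K.HasOrthogonalProjection]
    (S : E ≃L[𝕜] E) (hS : (S : E →ₗ[𝕜] E).IsSymmetric) (hK : ∀ x ∈ K, S x ∈ K)
    {y : E} (hy : y ∈ K) : S.symm y ∈ K := by
  obtain ⟨p, hp, q, hq, hpq⟩ := K.exists_add_mem_mem_orthogonal (S.symm y)
  have hSq : S q ∈ K ⊓ Kᗮ := by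
    refine ⟨?_, fun u hu => ?_⟩
    · have : S q = y - S p := by
        rw [eq_sub_iff_add_eq, ← map_add, add_comm, ← hpq, S.apply_symm_apply]
      rw [this]
      exact K.sub_mem hy (hK p hp)
    · exact (hS u q).symm.trans (Submodule.inner_right_of_mem_orthogonal (hK u hu) hq)
  rw [K.inf_orthogonal_eq_bot, Submodule.mem_bot, map_eq_zero_iff S] at hSq
  rwa [hpq, hSq, add_zero]

namespace LinearPMap

variable {𝕜 E : Type*} [RCLike 𝕜] [NormedAddCommGroup E] [InnerProductSpace 𝕜 E]

local notation "⟪" x ", " y "⟫" => inner 𝕜 x y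

/-- `ker (T† - e)`, written as the annihilator of `range (T - e)` so that it is closed for
every `T`; for self-adjoint `T` it is the eigenspace of `e`. -/
def weakEigenspace (T : E →ₗ.[𝕜] E) (e : ℝ) : Submodule 𝕜 E :=
  (LinearMap.range (T.toFun - (e : 𝕜) • T.domain.subtype))ᗮ

theorem mem_weakEigenspace_iff_forall_inner {T : E →ₗ.[𝕜] E} {e : ℝ} {x : E} :
    x ∈ T.weakEigenspace e ↔ ∀ ψ : T.domain, ⟪T ψ - (e : 𝕜) • (ψ : E), x⟫ = 0 := by
  simp only [weakEigenspace, Submodule.mem_orthogonal, LinearMap.mem_range, forall_exists_index,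
    forall_apply_eq_imp_iff]
  rfl

theorem isClosed_weakEigenspace (T : E →ₗ.[𝕜] E) (e : ℝ) :
    _root_.IsClosed (T.weakEigenspace e : Set E) :=
  Submodule.isClosed_orthogonal _

instance [CompleteSpace E] (T : E →ₗ.[𝕜] E) (e : ℝ) :
    (T.weakEigenspace e).HasOrthogonalProjection := by
  unfold weakEigenspace
  infer_instance

end LinearPMap

namespace IsSelfAdjoint

open LinearPMap

variable {𝕜 E : Type*} [RCLike 𝕜] [NormedAddCommGroup E] [InnerProductSpace 𝕜 E]
  [CompleteSpace E] {T : E →ₗ.[𝕜] E}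

local notation "⟪" x ", " y "⟫" => inner 𝕜 x y

theorem isFormalAdjoint (hT : IsSelfAdjoint T) : T.IsFormalAdjoint T := by
  simpa only [isSelfAdjoint_def.mp hT] using adjoint_isFormalAdjoint hT.dense_domain (T := T)

theorem mem_weakEigenspace_iff (hT : IsSelfAdjoint T) {e : ℝ} {x : E} :
    x ∈ T.weakEigenspace e ↔ ∃ hx : x ∈ T.domain, T ⟨x, hx⟩ = (e : 𝕜) • x := by
  rw [mem_weakEigenspace_iff_forall_inner]
  constructor
  · intro hx
    have h : ∀ ψ : T.domain, ⟪(e : 𝕜) • x, (ψ : E)⟫ = ⟪x, T ψ⟫ := fun ψ => by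
      have hψ := hx ψ
      rw [inner_sub_left, sub_eq_zero] at hψ
      rw [inner_smul_left, ← inner_conj_symm x (T ψ), hψ, inner_smul_left, map_mul,
        inner_conj_symm, RCLike.conj_conj, RCLike.conj_ofReal]
    rw [← isSelfAdjoint_def.mp hT]
    have hx' := mem_adjoint_domain_of_exists x ⟨_, h⟩
    exact ⟨hx', adjoint_apply_eq hT.dense_domain ⟨x, hx'⟩ h⟩
  · rintro ⟨hx, hTx⟩ ψ
    rw [inner_sub_left, hT.isFormalAdjoint ψ ⟨x, hx⟩, hTx, inner_smul_left, inner_smul_right,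
      RCLike.conj_ofReal, sub_self]

theorem weakEigenspace_isOrtho (hT : IsSelfAdjoint T) {e e' : ℝ} (hne : e ≠ e') :
    T.weakEigenspace e ⟂ T.weakEigenspace e' := by
  refine Submodule.isOrtho_iff_inner_eq.mpr fun x hx y hy => ?_
  obtain ⟨hxd, hTx⟩ := hT.mem_weakEigenspace_iff.mp hx
  obtain ⟨hyd, hTy⟩ := hT.mem_weakEigenspace_iff.mp hy
  have h := hT.isFormalAdjoint ⟨x, hxd⟩ ⟨y, hyd⟩
  rw [hTx, hTy, inner_smul_left, inner_smul_right, RCLike.conj_ofReal] at h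
  exact (mul_eq_mul_right_iff.mp h).resolve_left (by exact_mod_cast hne)

theorem symm_mem_weakEigenspace_of_hasSum {ι : Type*} (hT : IsSelfAdjoint T) {χ : ι → E}
    {ε : ι → ℝ} (hχ : ∀ γ, χ γ ∈ T.weakEigenspace (ε γ)) (S : E ≃L[𝕜] E)
    (hS : ∀ ψ, HasSum (fun γ => ⟪χ γ, ψ⟫ • χ γ) (S ψ)) {e : ℝ} {x : E}
    (hx : x ∈ T.weakEigenspace e) : S.symm x ∈ T.weakEigenspace e := by
  refine S.symm_mem_of_isSymmetric (LinearMap.isSymmetric_of_hasSum_inner_smul hS)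
    (fun y hy => ?_) hx
  refine Submodule.map_mem_of_hasSum_inner_smul (T.isClosed_weakEigenspace e)
    (fun γ => ?_) hS hy
  by_cases h : ε γ = e
  · exact .inl (h ▸ hχ γ)
  · exact .inr ((hT.weakEigenspace_isOrtho h).le (hχ γ))

end IsSelfAdjoint

theorem stmt_1_general
    {H : Type*} [NormedAddCommGroup H] [InnerProductSpace ℂ H] [CompleteSpace H]
    {Γ : Type*} [MetricSpace Γ]
    (χ : Γ → H)
    (S : H ≃L[ℂ] H)
    (hS : ∀ ψ : H, HasSum (fun γ : Γ => (inner ℂ (χ γ) ψ : ℂ) • χ γ) (S ψ))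
    (a₂ lam₂ : ℝ)
    (hS2 : ∀ γ γ' : Γ, ‖(inner ℂ (χ γ) (((S.symm : H →L[ℂ] H) ^ 2) (χ γ')) : ℂ)‖
      ≤ a₂ * Real.exp (-lam₂ * dist γ γ'))
    (Hop : H →ₗ.[ℂ] H)
    (hsa : IsSelfAdjoint Hop)
    (E : Γ → ℝ)
    (hmemχ : ∀ γ : Γ, χ γ ∈ Hop.domain)
    (heig : ∀ γ : Γ, Hop ⟨χ γ, hmemχ γ⟩ = (E γ : ℂ) • χ γ) :
    ∃ hdom : ∀ γ' : Γ, S.symm (χ γ') ∈ Hop.domain,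
      ∀ γ γ' : Γ,
        (E γ ≠ E γ' →
          (inner ℂ (χ γ) (S.symm (Hop ⟨S.symm (χ γ'), hdom γ'⟩)) : ℂ) = 0) ∧
        (E γ = E γ' →
          ‖(inner ℂ (χ γ) (S.symm (Hop ⟨S.symm (χ γ'), hdom γ'⟩)) : ℂ)‖
            ≤ a₂ * |E γ| * Real.exp (-lam₂ * dist γ γ')) := by
  have hχ (γ : Γ) : χ γ ∈ Hop.weakEigenspace (E γ) :=
    hsa.mem_weakEigenspace_iff.mpr ⟨hmemχ γ, heig γ⟩
  have hSχ (γ : Γ) : S.symm (χ γ) ∈ Hop.weakEigenspace (E γ) :=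
    hsa.symm_mem_weakEigenspace_of_hasSum hχ S hS (hχ γ)
  choose hdom hHop using fun γ => hsa.mem_weakEigenspace_iff.mp (hSχ γ)
  refine ⟨hdom, fun γ γ' => ?_⟩
  have hS₁symm : (S.symm : H →ₗ[ℂ] H).IsSymmetric :=
    (LinearMap.isSymmetric_of_hasSum_inner_smul hS).toLinearMap_symm (T := S.toLinearEquiv)
  have hval : inner ℂ (χ γ) (S.symm (Hop ⟨S.symm (χ γ'), hdom γ'⟩))
      = (E γ' : ℂ) * inner ℂ (S.symm (χ γ)) (S.symm (χ γ')) := by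
    rw [hHop, map_smul, inner_smul_right]
    exact congrArg _ (hS₁symm (χ γ) (S.symm (χ γ'))).symm
  refine ⟨fun hne => ?_, fun heq => ?_⟩
  · rw [hval, (hsa.weakEigenspace_isOrtho hne).inner_eq (hSχ γ) (hSχ γ'), mul_zero]
  · rw [hval, norm_mul, ← heq, Complex.norm_real, Real.norm_eq_abs, mul_comm a₂, mul_assoc]
    gcongr
    exact (congrArg norm (hS₁symm _ _)).trans_le (hS2 γ γ')

/-- Let `{χ_γ}` be a localized frame with frame operator `S`, and assume
`|⟨χ_γ, S^{-2} χ_{γ'}⟩| ≤ a₂ exp(-λ₂ d(γ,γ'))`.  Let `H` be a self-adjoint operator with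
dense domain such that each `χ_γ` is an eigenvector, `H χ_γ = E(γ) χ_γ`, and the domain is
invariant under `S`.  Then `S^{-1}χ_{γ'}` lies in the domain, the matrix elements
`⟨χ_γ, S^{-1} H S^{-1} χ_{γ'}⟩` vanish when `E(γ) ≠ E(γ')`, and are bounded by
`a₂ |E(γ)| exp(-λ₂ d(γ,γ'))` when `E(γ) = E(γ')`. -/
theorem stmt_1
    {H : Type*} [NormedAddCommGroup H] [InnerProductSpace ℂ H] [CompleteSpace H]
    [TopologicalSpace.SeparableSpace H]
    {Γ : Type*} [Countable Γ] [MetricSpace Γ]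
    (hm : ∀ ε : ℝ, 0 < ε → ∃ C : ℝ, ∀ γ : Γ,
      ∃ s : ℝ, s ≤ C ∧ HasSum (fun ξ : Γ => Real.exp (-ε * dist γ ξ)) s)
    (χ : Γ → H) (A B : ℝ) (hA : 0 < A) (hAB : A ≤ B)
    (hframe : ∀ ψ : H, ∃ s : ℝ,
      HasSum (fun γ : Γ => ‖(inner ℂ (χ γ) ψ : ℂ)‖ ^ 2) s ∧
        A * ‖ψ‖ ^ 2 ≤ s ∧ s ≤ B * ‖ψ‖ ^ 2)
    (S : H ≃L[ℂ] H)
    (hS : ∀ ψ : H, HasSum (fun γ : Γ => (inner ℂ (χ γ) ψ : ℂ) • χ γ) (S ψ))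
    (G lam : ℝ) (hG : 1 ≤ G) (hlam : 0 < lam)
    (hnorm : ∀ γ : Γ, ‖χ γ‖ = 1)
    (hloc : ∀ γ γ' : Γ, ‖(inner ℂ (χ γ) (χ γ') : ℂ)‖ ≤ G * Real.exp (-lam * dist γ γ'))
    (a₂ lam₂ : ℝ) (ha₂ : 0 < a₂) (hlam₂ : 0 < lam₂) (hlam₂lam : lam₂ < lam)
    (hS2 : ∀ γ γ' : Γ, ‖(inner ℂ (χ γ) (((S.symm : H →L[ℂ] H) ^ 2) (χ γ')) : ℂ)‖
      ≤ a₂ * Real.exp (-lam₂ * dist γ γ'))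
    (Hop : H →ₗ.[ℂ] H) (hdense : Dense (Hop.domain : Set H))
    (hsa : IsSelfAdjoint Hop)
    (E : Γ → ℝ)
    (hmemχ : ∀ γ : Γ, χ γ ∈ Hop.domain)
    (heig : ∀ γ : Γ, Hop ⟨χ γ, hmemχ γ⟩ = (E γ : ℂ) • χ γ)
    (hSD : ∀ x : H, x ∈ Hop.domain → S x ∈ Hop.domain) :
    ∃ hdom : ∀ γ' : Γ, S.symm (χ γ') ∈ Hop.domain,
      ∀ γ γ' : Γ,
        (E γ ≠ E γ' →
          (inner ℂ (χ γ) (S.symm (Hop ⟨S.symm (χ γ'), hdom γ'⟩)) : ℂ) = 0) ∧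
        (E γ = E γ' →
          ‖(inner ℂ (χ γ) (S.symm (Hop ⟨S.symm (χ γ'), hdom γ'⟩)) : ℂ)‖
            ≤ a₂ * |E γ| * Real.exp (-lam₂ * dist γ γ')) :=
  stmt_1_general χ S hS a₂ lam₂ hS2 Hop hsa E hmemχ heig
end

section
/- Let Γ be a countable set with metric d such that m_ε := sup_{γ∈Γ} Σ_{ξ∈Γ} exp(−ε·d(γ,ξ)) < ∞ for all ε > 0, and assume Γ is ν-dimensional: there are κ > 0 and ν ∈ ℕ such that |{γ' ∈ Γ : d(γ',γ) ≤ r}| ≤ κ·(1+r)^ν for all γ ∈ Γ and r ≥ 0. Let f : Γ×Γ → [0,∞) be symmetric and satisfy f(x,y) ≤ f₀·exp(−μ·d(x,y)) for some constants f₀ > 0 and μ > 0. Then for all 0 < ζ < ξ < μ: sup_{γ∈Γ} sup_{Z'} (exp(ζ·d(γ,Z')) / (1+diam(Z'))^ν) · Σ_{{x,y}⊆Γ} f(x,y)·(1+d(x,y))^ν·exp(−ζ·d(γ,{x,y}))·exp(−ξ·d({x,y},Z')) < ∞, where the second supremum runs over all nonempty finite subsets Z' ⊆ Γ, and the sum runs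 over all unordered pairs {x,y} of points of Γ. -/
/-!
Write `D = d(γ, Z')`, `δ = d(x, y)` and `p = d(x, Z')`. The triangle inequality gives
`D ≤ min (d(γ,x), d(γ,y)) + δ + d({x,y}, Z')` and `p ≤ d({x,y}, Z') + δ`, so the weight
`e^{ζ D}` is absorbed by the two decay factors at the price of `e^{ξ δ}`, leaving `e^{-(ξ-ζ) p}`.
The decay `e^{-μ δ}` of `f` pays for `e^{ξ δ}` and for `(1 + δ)^ν`, with `e^{-(μ-ξ) δ / 2}` to
spare. Summing this over `y` costs `m_{(μ-ξ)/2}`; summing `e^{-(ξ-ζ) p}` over `x`, after bounding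
it by the sum over `z ∈ Z'` of `e^{-(ξ-ζ) d(x,z)}`, costs `|Z'| m_{ξ-ζ}`, and `ν`-dimensionality
gives `|Z'| ≤ κ (1 + diam Z')^ν`.
-/

open scoped ENNReal Nat
open Real Metric

lemma one_add_pow_le_mul_exp (ν : ℕ) {ε t : ℝ} (hε : 0 < ε) (ht : 0 ≤ t) :
    (1 + t) ^ ν ≤ ν ! / ε ^ ν * exp ε * exp (ε * t) := by
  have h := pow_div_factorial_le_exp _ (by positivity : 0 ≤ ε * (1 + t)) ν
  rw [div_le_iff₀ (by positivity), mul_pow, mul_add, mul_one, exp_add] at h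
  rw [div_mul_eq_mul_div, div_mul_eq_mul_div, le_div_iff₀ (by positivity)]
  linarith

lemma Finset.inf'_dist_eq_infDist {α : Type*} [PseudoMetricSpace α] {s : Finset α}
    (hs : s.Nonempty) (x : α) : s.inf' hs (dist x ·) = infDist x s := by
  refine le_antisymm ((le_infDist (by simpa)).2 fun y hy => s.inf'_le _ hy) ?_
  obtain ⟨y, hy, h⟩ := s.exists_mem_eq_inf' hs (dist x ·)
  exact h ▸ infDist_le_dist_of_mem hy

lemma Finset.dist_le_sup'_sup' {α : Type*} [PseudoMetricSpace α] {s : Finset α}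
    (hs : s.Nonempty) {x y : α} (hx : x ∈ s) (hy : y ∈ s) :
    dist x y ≤ s.sup' hs fun z => s.sup' hs fun w => dist z w :=
  s.le_sup'_of_le (fun z => s.sup' hs fun w => dist z w) hx (s.le_sup' _ hy)

lemma Finset.sup'_sup'_dist_nonneg {α : Type*} [PseudoMetricSpace α] {s : Finset α}
    (hs : s.Nonempty) : 0 ≤ s.sup' hs fun z => s.sup' hs fun w => dist z w := by
  obtain ⟨x, hx⟩ := hs
  exact (dist_self x).symm.trans_le (s.dist_le_sup'_sup' ⟨x, hx⟩ hx hx)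

lemma Finset.card_le_of_ball_card_le {α : Type*} [PseudoMetricSpace α] {κ : ℝ} {ν : ℕ}
    (hdim : ∀ (x : α) (r : ℝ), 0 ≤ r →
      {y : α | dist y x ≤ r}.Finite ∧ (Nat.card {y : α | dist y x ≤ r} : ℝ) ≤ κ * (1 + r) ^ ν)
    {s : Finset α} (hs : s.Nonempty) :
    (s.card : ℝ) ≤ κ * (1 + s.sup' hs fun z => s.sup' hs fun w => dist z w) ^ ν := by
  obtain ⟨x, hx⟩ := hs
  obtain ⟨hfin, hcard⟩ := hdim x _ (s.sup'_sup'_dist_nonneg ⟨x, hx⟩)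
  refine le_trans ?_ hcard
  rw [Nat.card_coe_set_eq, ← Set.ncard_coe_finset s]
  exact_mod_cast Set.ncard_le_ncard (fun y hy => s.dist_le_sup'_sup' ⟨x, hx⟩ hy hx) hfin

lemma exists_tsum_ofReal_le {α β : Type*} {g : α → β → ℝ} (hg : ∀ a b, 0 ≤ g a b)
    (h : ∃ C : ℝ, ∀ a, ∃ s : ℝ, s ≤ C ∧ HasSum (g a) s) :
    ∃ M : ℝ≥0∞, M ≠ ⊤ ∧ ∀ a, ∑' b, ENNReal.ofReal (g a b) ≤ M := by
  obtain ⟨C, hC⟩ := h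
  refine ⟨ENNReal.ofReal C, ENNReal.ofReal_ne_top, fun a => ?_⟩
  obtain ⟨s, hs, hsum⟩ := hC a
  rw [← ENNReal.ofReal_tsum_of_nonneg (hg a) hsum.summable, hsum.tsum_eq]
  exact ENNReal.ofReal_le_ofReal hs

lemma tsum_ofReal_exp_infDist_le {α : Type*} [PseudoMetricSpace α] {ε : ℝ} {M : ℝ≥0∞}
    (hM : ∀ x : α, ∑' y, ENNReal.ofReal (exp (-ε * dist x y)) ≤ M) {s : Finset α}
    (hs : s.Nonempty) :
    ∑' x, ENNReal.ofReal (exp (-ε * infDist x (s : Set α))) ≤ s.card * M := by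
  calc ∑' x, ENNReal.ofReal (exp (-ε * infDist x (s : Set α)))
      ≤ ∑' x, ∑ z ∈ s, ENNReal.ofReal (exp (-ε * dist z x)) := by
        refine ENNReal.tsum_le_tsum fun x => ?_
        obtain ⟨z, hz, h⟩ := s.finite_toSet.isCompact.exists_infDist_eq_dist (by simpa) x
        rw [h, dist_comm]
        exact Finset.single_le_sum (f := fun z => ENNReal.ofReal (exp (-ε * dist z x)))
          (fun _ _ => zero_le) hz
    _ = ∑ z ∈ s, ∑' x, ENNReal.ofReal (exp (-ε * dist z x)) :=
        Summable.tsum_finsetSum fun _ _ => ENNReal.summable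
    _ ≤ ∑ _ ∈ s, M := Finset.sum_le_sum fun z _ => hM z
    _ = s.card * M := by rw [Finset.sum_const, nsmul_eq_mul]

lemma ENNReal.tsum_prod_mul_le {α β : Type*} {g : α → ℝ≥0∞} {h : α → β → ℝ≥0∞}
    {A B : ℝ≥0∞} (hg : ∑' a, g a ≤ A) (hh : ∀ a, ∑' b, h a b ≤ B) :
    ∑' p : α × β, g p.1 * h p.1 p.2 ≤ A * B :=
  calc ∑' p : α × β, g p.1 * h p.1 p.2 = ∑' a, g a * ∑' b, h a b := by
        simp only [ENNReal.tsum_prod', ENNReal.tsum_mul_left]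
    _ ≤ ∑' a, g a * B := ENNReal.tsum_le_tsum fun a => mul_le_mul_right (hh a) _
    _ = (∑' a, g a) * B := ENNReal.tsum_mul_right
    _ ≤ A * B := by gcongr

lemma ENNReal.mul_tsum_sym2_le {α : Type*} {g : Sym2 α → ℝ≥0∞} {G : α × α → ℝ≥0∞}
    {c : ℝ≥0∞} (h : ∀ x y, c * g s(x, y) ≤ G (x, y)) : c * ∑' q, g q ≤ ∑' p, G p := by
  rw [← ENNReal.tsum_mul_left]
  exact (ENNReal.tsum_le_tsum_comp_of_surjective Sym2.mk_surjective _).trans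
    (ENNReal.tsum_le_tsum fun p => h p.1 p.2)

lemma exp_infDist_mul_exp_neg_le {α : Type*} [PseudoMetricSpace α] (s : Set α) (γ x y : α)
    {ζ ξ : ℝ} (hζ : 0 ≤ ζ) (hζξ : ζ ≤ ξ) :
    exp (ζ * infDist γ s) * exp (-(ζ * min (dist γ x) (dist γ y))) *
        exp (-(ξ * min (infDist x s) (infDist y s))) ≤
      exp (ξ * dist x y) * exp (-(ξ - ζ) * infDist x s) := by
  have hγx := infDist_le_infDist_add_dist (x := γ) (y := x) (s := s)
  have hγy := infDist_le_infDist_add_dist (x := γ) (y := y) (s := s)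
  have hxy := infDist_le_infDist_add_dist (x := x) (y := y) (s := s)
  have hyx := infDist_le_infDist_add_dist (x := y) (y := x) (s := s)
  rw [dist_comm y x] at hyx
  have hd := dist_nonneg (x := x) (y := y)
  have hγ : infDist γ s ≤ min (dist γ x) (dist γ y) + dist x y +
      min (infDist x s) (infDist y s) := by
    rcases min_cases (dist γ x) (dist γ y) with ⟨h₁, -⟩ | ⟨h₁, -⟩ <;>
      rcases min_cases (infDist x s) (infDist y s) with ⟨h₂, -⟩ | ⟨h₂, -⟩ <;>
      linarith
  have hx : infDist x s - dist x y ≤ min (infDist x s) (infDist y s) :=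
    le_min (by linarith) (by linarith)
  simp only [← exp_add, exp_le_exp]
  linarith [mul_le_mul_of_nonneg_left hγ hζ, mul_le_mul_of_nonneg_left hx (sub_nonneg.2 hζξ)]

lemma exp_infDist_mul_summand_le {α : Type*} [PseudoMetricSpace α] (s : Set α) (γ x y : α) {ν : ℕ}
    {f₀ μ ξ ζ P F : ℝ} (hf₀ : 0 ≤ f₀) (hF : F ≤ f₀ * exp (-μ * dist x y))
    (hP : (1 + dist x y) ^ ν ≤ P * exp ((μ - ξ) / 2 * dist x y)) (hζ : 0 ≤ ζ) (hζξ : ζ ≤ ξ) :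
    exp (ζ * infDist γ s) * (F * (1 + dist x y) ^ ν * exp (-(ζ * min (dist γ x) (dist γ y))) *
        exp (-(ξ * min (infDist x s) (infDist y s)))) ≤
      f₀ * P * (exp (-(ξ - ζ) * infDist x s) * exp (-((μ - ξ) / 2) * dist x y)) :=
  calc _ = F * (1 + dist x y) ^ ν * (exp (ζ * infDist γ s) *
          exp (-(ζ * min (dist γ x) (dist γ y))) *
          exp (-(ξ * min (infDist x s) (infDist y s)))) := by ring
    _ ≤ f₀ * exp (-μ * dist x y) * (P * exp ((μ - ξ) / 2 * dist x y)) *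
          (exp (ξ * dist x y) * exp (-(ξ - ζ) * infDist x s)) := by
        have hP0 : 0 ≤ P * exp ((μ - ξ) / 2 * dist x y) :=
          (by positivity : (0 : ℝ) ≤ (1 + dist x y) ^ ν).trans hP
        gcongr ?_ * ?_
        · exact mul_le_mul hF hP (by positivity) (by positivity)
        · exact exp_infDist_mul_exp_neg_le s γ x y hζ hζξ
    _ = f₀ * P * (exp (-(ξ - ζ) * infDist x s) * exp (-((μ - ξ) / 2) * dist x y)) := by
        rw [mul_assoc f₀, mul_assoc f₀, mul_assoc f₀]
        congr 1
        have : exp (-μ * dist x y) * exp ((μ - ξ) / 2 * dist x y) * exp (ξ * dist x y) =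
            exp (-((μ - ξ) / 2) * dist x y) := by
          rw [← exp_add, ← exp_add]; ring_nf
        linear_combination (P * exp (-(ξ - ζ) * infDist x s)) * this

/-- On a `ν`-dimensional countable metric space `Γ` with `m_ε < ∞`, a
symmetric two-body coefficient `f(x,y) ≤ f₀ exp(-μ d(x,y))` satisfies, for all
`0 < ζ < ξ < μ`, the uniform bound
`sup_γ sup_{Z'} (e^{ζ d(γ,Z')}/(1+diam Z')^ν) Σ_{{x,y}} f(x,y)(1+d(x,y))^ν
   e^{-ζ d(γ,{x,y})} e^{-ξ d({x,y},Z')} < ∞`,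
the sum being over unordered pairs of points of `Γ`. -/
theorem stmt_4
    {Γ : Type*} [MetricSpace Γ]
    (hm : ∀ ε : ℝ, 0 < ε → ∃ C : ℝ, ∀ γ : Γ,
      ∃ s : ℝ, s ≤ C ∧ HasSum (fun ξ : Γ => Real.exp (-ε * dist γ ξ)) s)
    (ν : ℕ) (κ : ℝ)
    (hdim : ∀ (γ : Γ) (r : ℝ), 0 ≤ r →
      {γ' : Γ | dist γ' γ ≤ r}.Finite ∧
        (Nat.card {γ' : Γ | dist γ' γ ≤ r} : ℝ) ≤ κ * (1 + r) ^ ν)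
    (f : Γ → Γ → ℝ) (hfsymm : ∀ x y : Γ, f x y = f y x)
    (f₀ μ : ℝ) (hf₀ : 0 < f₀)
    (hfdec : ∀ x y : Γ, f x y ≤ f₀ * Real.exp (-μ * dist x y))
    (ζ ξ : ℝ) (hζ : 0 < ζ) (hζξ : ζ < ξ) (hξμ : ξ < μ) :
    ∃ C : ℝ≥0∞, C ≠ ⊤ ∧ ∀ (γ : Γ) (Z' : Finset Γ) (hZ' : Z'.Nonempty),
      ENNReal.ofReal (Real.exp (ζ * Z'.inf' hZ' fun z => dist γ z) /
          (1 + Z'.sup' hZ' fun z => Z'.sup' hZ' fun w => dist z w) ^ ν) *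
        ∑' q : Sym2 Γ, ENNReal.ofReal
          (Sym2.lift ⟨fun x y =>
              f x y * (1 + dist x y) ^ ν *
                Real.exp (-(ζ * min (dist γ x) (dist γ y))) *
                Real.exp (-(ξ * min (Z'.inf' hZ' fun z => dist x z)
                  (Z'.inf' hZ' fun z => dist y z))),
            by
              intro x y
              dsimp only
              rw [hfsymm x y, dist_comm x y, min_comm (dist γ x) (dist γ y),
                min_comm (Z'.inf' hZ' fun z => dist x z)
                  (Z'.inf' hZ' fun z => dist y z)]⟩ q)
        ≤ C := by
  have hε : 0 < (μ - ξ) / 2 := by linarith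
  obtain ⟨M₁, hM₁, hM₁le⟩ :=
    exists_tsum_ofReal_le (fun _ _ => (exp_pos _).le) (hm (ξ - ζ) (by linarith))
  obtain ⟨M₂, hM₂, hM₂le⟩ := exists_tsum_ofReal_le (fun _ _ => (exp_pos _).le) (hm _ hε)
  set P := ν ! / ((μ - ξ) / 2) ^ ν * exp ((μ - ξ) / 2)
  refine ⟨ENNReal.ofReal (f₀ * P * κ) * M₁ * M₂, by finiteness, fun γ Z' hZ' => ?_⟩
  set R := Z'.sup' hZ' fun z => Z'.sup' hZ' fun w => dist z w
  have hR : 0 < (1 + R) ^ ν := by have := Z'.sup'_sup'_dist_nonneg hZ'; positivity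
  calc _ ≤ ∑' p : Γ × Γ, ENNReal.ofReal (f₀ * P / (1 + R) ^ ν) *
          (ENNReal.ofReal (exp (-(ξ - ζ) * infDist p.1 Z')) *
            ENNReal.ofReal (exp (-((μ - ξ) / 2) * dist p.1 p.2))) := by
        refine ENNReal.mul_tsum_sym2_le fun x y => ?_
        simp only [Sym2.lift_mk, Finset.inf'_dist_eq_infDist]
        rw [← ENNReal.ofReal_mul (by positivity), ← ENNReal.ofReal_mul (by positivity),
          ← ENNReal.ofReal_mul (by positivity)]
        apply ENNReal.ofReal_le_ofReal
        rw [div_mul_eq_mul_div, div_mul_eq_mul_div]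
        gcongr ?_ / _
        exact exp_infDist_mul_summand_le _ γ x y hf₀.le (hfdec x y)
          (one_add_pow_le_mul_exp ν hε dist_nonneg) hζ.le hζξ.le
    _ ≤ ENNReal.ofReal (f₀ * P / (1 + R) ^ ν) * (Z'.card * M₁ * M₂) := by
        rw [ENNReal.tsum_mul_left]
        gcongr
        exact ENNReal.tsum_prod_mul_le (tsum_ofReal_exp_infDist_le hM₁le hZ') hM₂le
    _ ≤ ENNReal.ofReal (f₀ * P * κ) * M₁ * M₂ := by
        rw [← mul_assoc, ← mul_assoc]
        gcongr
        rw [← ENNReal.ofReal_natCast, ← ENNReal.ofReal_mul (by positivity)]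
        apply ENNReal.ofReal_le_ofReal
        rw [mul_comm_div]
        gcongr
        rw [div_le_iff₀ hR]
        exact Z'.card_le_of_ball_card_le hdim hZ'
end

section
/- Let ξ > 0, let {χ_γ}_{γ∈Γ} be a localized frame in ℋ with constant G ≥ 1 and rate λ = ξ, let 𝒜 be the CAR algebra over ℋ with a_γ := a(χ_γ), and let Φ be an interaction such that C_Φ(ζ,ξ) < ∞ for a given 0 < ζ < ξ. Then for every finite subset Λ ⊆ Γ, every t ∈ ℝ, and all γ, γ' ∈ Γ: ‖τ_t^Λ(a_γ*)·a_{γ'} + a_{γ'}·τ_t^Λ(a_γ*)‖ ≤ G·exp(−ζ·(d(γ,γ') − v·|t|)), where v = 16·G·C_Φ(ζ,ξ)/ζ; and the same bound holds with a_γ* replaced by a_γ and/or a_{γ'} replaced by a_{γ'}*. -/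
/-!
The anticommutator `g(t) = {τ_t(a_γ^♯), a_{γ'}^♯}` starts at the scalar `{a_γ^♯, a_{γ'}^♯}`,
of size at most `G e^{-ξ d(γ,γ')}`, and has derivative `{τ_t([iH_Λ, a_γ^♯]), a_{γ'}^♯}`. Since
each `M_k(Z)` is an even product of creation and annihilation operators, the graded Leibniz
rule writes `[M_k(Z), a_γ^♯]` through the scalars `{a_γ^♯, a_z^♯}`, `z ∈ Z`, times odd
products; the anticommutator of such an odd product with `a_{γ'}^♯` expands once more into
terms `{τ_t(a_z^♯), a_{γ'}^♯}` of the original kind. Summing over `Z` with the weights in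
`C_Φ(ζ, ξ)` yields a closed differential inequality; its Picard iterates, with the `n`-th
remainder bounded by `2 (Rt)^n / n!`, give `‖g(t)‖ ≤ G e^{-ζ d(γ,γ')} e^{8 G C_Φ t}` for
`t ≥ 0`. Negative times follow from `τ_{-t} = τ_t⁻¹`.
-/

open Filter Topology

/-- Distance from a point to a finite set (`0` for the empty set). -/
noncomputable def distPtSet {Γ : Type*} [MetricSpace Γ] (γ : Γ) (Z : Finset Γ) : ℝ :=
  if h : Z.Nonempty then Z.inf' h fun z => dist γ z else 0

/-- Distance between two finite sets (`0` if either is empty). -/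
noncomputable def distSetSet {Γ : Type*} [MetricSpace Γ] (Z Z' : Finset Γ) : ℝ :=
  if h : Z.Nonempty ∧ Z'.Nonempty then Z.inf' h.1 fun z => Z'.inf' h.2 fun z' => dist z z'
  else 0

/-- Diameter of a finite set (`0` for the empty set). -/
noncomputable def diamSet {Γ : Type*} [MetricSpace Γ] (Z : Finset Γ) : ℝ :=
  if h : Z.Nonempty then Z.sup' h fun z => Z.sup' h fun w => dist z w else 0

section AnticommExpansion

variable {R : Type*}

/-- The graded Leibniz expansion of `B * l.prod ∓ l.prod * B` into terms each containing one
anticommutator `B * x + x * B` with an entry `x` of `l`. -/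
def anticommExpansion [Ring R] (B : R) : List R → R
  | [] => 0
  | x :: l => (B * x + x * B) * l.prod - x * anticommExpansion B l

section Ring

variable [Ring R] (B : R) (l : List R)

theorem mul_prod_eq_anticommExpansion_add :
    B * l.prod = anticommExpansion B l + (-1) ^ l.length * (l.prod * B) := by
  induction l with
  | nil => simp [anticommExpansion]
  | cons x l ih =>
    have hsign : x * ((-1 : R) ^ l.length * (l.prod * B)) =
        (-1) ^ l.length * (x * (l.prod * B)) := by
      rw [← mul_assoc, ← ((Commute.neg_one_left x).pow_left _).eq, mul_assoc]
    calc B * (x :: l).prod = (B * x + x * B) * l.prod - x * (B * l.prod) := by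
          rw [List.prod_cons]; noncomm_ring
      _ = _ := by
          rw [ih, mul_add, hsign, anticommExpansion, List.prod_cons, List.length_cons, pow_succ]
          noncomm_ring

theorem prod_mul_sub_mul_prod_of_even (hl : Even l.length) :
    l.prod * B - B * l.prod = -anticommExpansion B l := by
  rw [mul_prod_eq_anticommExpansion_add, hl.neg_one_pow]; noncomm_ring

theorem prod_mul_add_mul_prod_of_odd (hl : Odd l.length) :
    l.prod * B + B * l.prod = anticommExpansion B l := by
  rw [mul_prod_eq_anticommExpansion_add, hl.neg_one_pow]; noncomm_ring

theorem exists_anticommExpansion_eq_sum {𝕜 : Type*} [NormedField 𝕜] [Algebra 𝕜 R] {r : ℝ}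
    (h : ∀ x ∈ l, ∃ c : 𝕜, B * x + x * B = c • 1 ∧ ‖c‖ ≤ r) :
    ∃ c : ℕ → 𝕜, (∀ j < l.length, ‖c j‖ ≤ r) ∧
      anticommExpansion B l = ∑ j ∈ Finset.range l.length, c j • (l.eraseIdx j).prod := by
  induction l with
  | nil => exact ⟨0, by simp, by simp [anticommExpansion]⟩
  | cons x l ih =>
    obtain ⟨c, hc, hcr⟩ := h x List.mem_cons_self
    obtain ⟨c', hc'r, hc'⟩ := ih fun y hy => h y (List.mem_cons_of_mem x hy)
    refine ⟨fun | 0 => c | j + 1 => -c' j, fun j hj => ?_, ?_⟩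
    · cases j with
      | zero => exact hcr
      | succ j => simpa using hc'r j (by simpa using hj)
    · rw [anticommExpansion, hc, hc', List.length_cons, Finset.sum_range_succ', Finset.mul_sum,
        add_comm, sub_eq_add_neg, ← Finset.sum_neg_distrib]
      simp

end Ring

variable [NormedRing R] [NormOneClass R]

theorem List.norm_prod_le_one {l : List R} (hl : ∀ x ∈ l, ‖x‖ ≤ 1) : ‖l.prod‖ ≤ 1 := by
  induction l with
  | nil => simp
  | cons x l ih =>
    rw [List.prod_cons]
    exact (norm_mul_le _ _).trans (mul_le_one₀ (hl x List.mem_cons_self) (norm_nonneg _)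
      (ih fun y hy => hl y (List.mem_cons_of_mem x hy)))

theorem norm_anticommExpansion_le (B : R) (l : List R) (hl : ∀ x ∈ l, ‖x‖ ≤ 1) :
    ‖anticommExpansion B l‖ ≤ (l.map fun x => ‖B * x + x * B‖).sum := by
  induction l with
  | nil => simp [anticommExpansion]
  | cons x l ih =>
    have hx : ‖x‖ ≤ 1 := hl x List.mem_cons_self
    have hl' : ∀ y ∈ l, ‖y‖ ≤ 1 := fun y hy => hl y (List.mem_cons_of_mem x hy)
    have hprod : ‖l.prod‖ ≤ 1 := List.norm_prod_le_one hl'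
    rw [anticommExpansion, List.map_cons, List.sum_cons]
    calc ‖(B * x + x * B) * l.prod - x * anticommExpansion B l‖
        ≤ ‖B * x + x * B‖ * ‖l.prod‖ + ‖x‖ * ‖anticommExpansion B l‖ :=
          (norm_sub_le _ _).trans (add_le_add (norm_mul_le _ _) (norm_mul_le _ _))
      _ ≤ ‖B * x + x * B‖ * 1 + 1 * (l.map fun x => ‖B * x + x * B‖).sum := by
          gcongr
          exact ih hl'
      _ = _ := by ring

theorem norm_anticomm_map_commutator_le {𝕜 F : Type*} [NormedField 𝕜] [NormedAlgebra 𝕜 R]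
    [FunLike F R R] [AlgHomClass F 𝕜 R R] (φ : F)
    (X Y : R) {l : List R} (hl : Even l.length) {r β : ℝ} (hφ : ∀ x ∈ l, ‖φ x‖ ≤ 1)
    (hX : ∀ x ∈ l, ∃ c : 𝕜, X * x + x * X = c • 1 ∧ ‖c‖ ≤ r)
    (hY : ∀ x ∈ l, ‖φ x * Y + Y * φ x‖ ≤ β) :
    ‖φ (l.prod * X - X * l.prod) * Y + Y * φ (l.prod * X - X * l.prod)‖ ≤
      l.length ^ 2 * r * β := by
  obtain ⟨c, hcr, hc⟩ := exists_anticommExpansion_eq_sum X l hX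
  have hterm : ∀ j < l.length,
      ‖c j • (φ (l.eraseIdx j).prod * Y + Y * φ (l.eraseIdx j).prod)‖ ≤ r * (l.length * β) := by
    intro j hj
    have hβ : 0 ≤ β := (norm_nonneg _).trans (hY _ (List.getElem_mem hj))
    set m := (l.eraseIdx j).map φ
    have hm : m.length + 1 = l.length := by
      simp only [m, List.length_map, List.length_eraseIdx, if_pos hj]; omega
    have hsub : ∀ x ∈ m, ∃ y ∈ l, φ y = x := fun x hx => by
      obtain ⟨y, hy, rfl⟩ := List.mem_map.1 hx
      exact ⟨y, List.eraseIdx_subset hy, rfl⟩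
    have hodd : Odd m.length := Nat.not_even_iff_odd.1 (Nat.even_add_one.1 (hm ▸ hl))
    rw [map_list_prod, prod_mul_add_mul_prod_of_odd Y m hodd, norm_smul]
    refine mul_le_mul (hcr j hj) ?_ (norm_nonneg _) ((norm_nonneg _).trans (hcr j hj))
    calc ‖anticommExpansion Y m‖ ≤ (m.map fun x => ‖Y * x + x * Y‖).sum :=
          norm_anticommExpansion_le Y m fun x hx => by
            obtain ⟨y, hy, rfl⟩ := hsub x hx; exact hφ y hy
      _ ≤ (m.map fun x => ‖Y * x + x * Y‖).length • β :=
          List.sum_le_card_nsmul _ β fun b hb => by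
            obtain ⟨x, hx, rfl⟩ := List.mem_map.1 hb
            obtain ⟨y, hy, rfl⟩ := hsub x hx
            rw [add_comm]; exact hY y hy
      _ ≤ l.length * β := by rw [List.length_map, nsmul_eq_mul]; gcongr; omega
  calc ‖φ (l.prod * X - X * l.prod) * Y + Y * φ (l.prod * X - X * l.prod)‖
      = ‖∑ j ∈ Finset.range l.length,
          c j • (φ (l.eraseIdx j).prod * Y + Y * φ (l.eraseIdx j).prod)‖ := by
        rw [prod_mul_sub_mul_prod_of_even X l hl, hc, ← norm_neg]
        simp only [map_neg, map_sum, map_smul, neg_mul, mul_neg, Finset.sum_mul, Finset.mul_sum,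
          smul_mul_assoc, mul_smul_comm, smul_add, Finset.sum_add_distrib, neg_add, neg_neg]
    _ ≤ ∑ j ∈ Finset.range l.length, r * (l.length * β) :=
        (norm_sum_le _ _).trans (Finset.sum_le_sum fun j hj => hterm j (Finset.mem_range.1 hj))
    _ = l.length ^ 2 * r * β := by rw [Finset.sum_const, Finset.card_range, nsmul_eq_mul]; ring

end AnticommExpansion

section CStar

variable {𝒜 : Type*} [NormedRing 𝒜] [StarRing 𝒜] [CStarRing 𝒜] [NormedAlgebra ℂ 𝒜]

theorem CStarRing.norm_sq_le_of_mul_self_eq_zero {x : 𝒜} (hx : x * x = 0) {c : ℂ}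
    (hc : x * star x + star x * x = c • 1) : ‖x‖ ^ 2 ≤ ‖c‖ := by
  set y := star x * x
  have hy : star y * y = c • y := calc
    star y * y = star x * (x * star x) * x := by simp only [y, star_mul, star_star]; noncomm_ring
    _ = star x * (c • 1 - y) * x := by rw [← hc]; noncomm_ring
    _ = c • y - star (x * x) * (x * x) := by simp only [y, star_mul]; noncomm_ring
    _ = c • y := by rw [hx, mul_zero, sub_zero]
  have hyc : ‖y‖ * ‖y‖ ≤ ‖c‖ * ‖y‖ := by
    rw [← CStarRing.norm_star_mul_self, hy]; exact norm_smul_le c y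
  rw [sq, ← CStarRing.norm_star_mul_self]
  rcases (norm_nonneg y).eq_or_lt with h | h
  · rw [← h]; exact norm_nonneg c
  · exact le_of_mul_le_mul_right hyc h

end CStar

section CAR

variable {H 𝒜 : Type*}

def IsFermionOp [Star 𝒜] (a : H → 𝒜) (ψ : H) (X : 𝒜) : Prop :=
  X = a ψ ∨ X = star (a ψ)

theorem IsFermionOp.star [InvolutiveStar 𝒜] {a : H → 𝒜} {ψ : H} {X : 𝒜}
    (hX : IsFermionOp a ψ X) : IsFermionOp a ψ (star X) := by
  rcases hX with rfl | rfl
  · exact Or.inr rfl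
  · exact Or.inl (star_star _)

variable [NormedAddCommGroup H] [InnerProductSpace ℂ H]

structure IsCAR [Ring 𝒜] [StarRing 𝒜] [Algebra ℂ 𝒜] (a : H → 𝒜) : Prop where
  anticomm_star : ∀ ψ φ : H, a ψ * star (a φ) + star (a φ) * a ψ = (inner ℂ ψ φ : ℂ) • 1
  anticomm : ∀ ψ φ : H, a ψ * a φ + a φ * a ψ = 0

section Algebra

variable [Ring 𝒜] [StarRing 𝒜] [Algebra ℂ 𝒜] {a : H → 𝒜}

theorem IsCAR.mul_self_eq_zero (ha : IsCAR a) (ψ : H) : a ψ * a ψ = 0 := by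
  have h : (2 : ℂ) • (a ψ * a ψ) = 0 := by rw [two_smul]; exact ha.anticomm ψ ψ
  exact (smul_eq_zero.1 h).resolve_left two_ne_zero

theorem IsFermionOp.exists_anticomm_eq_smul_one (ha : IsCAR a) {ψ φ : H} {X Y : 𝒜}
    (hX : IsFermionOp a ψ X) (hY : IsFermionOp a φ Y) :
    ∃ c : ℂ, X * Y + Y * X = c • 1 ∧ ‖c‖ ≤ ‖(inner ℂ ψ φ : ℂ)‖ := by
  rcases hX with rfl | rfl <;> rcases hY with rfl | rfl
  · exact ⟨0, by rw [ha.anticomm, zero_smul], by simp⟩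
  · exact ⟨_, ha.anticomm_star ψ φ, le_rfl⟩
  · exact ⟨_, by rw [add_comm]; exact ha.anticomm_star φ ψ, (norm_inner_symm _ _).le⟩
  · refine ⟨0, ?_, by simp⟩
    simpa [star_mul] using congrArg Star.star (ha.anticomm φ ψ)

end Algebra

variable [NormedRing 𝒜] [StarRing 𝒜] [CStarRing 𝒜] [NormedAlgebra ℂ 𝒜] {a : H → 𝒜}

theorem IsCAR.norm_le (ha : IsCAR a) (ψ : H) : ‖a ψ‖ ≤ ‖ψ‖ := by
  have h := CStarRing.norm_sq_le_of_mul_self_eq_zero (ha.mul_self_eq_zero ψ) (ha.anticomm_star ψ ψ)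
  rw [inner_self_eq_norm_sq_to_K, norm_pow, RCLike.norm_ofReal, abs_norm] at h
  exact (pow_le_pow_iff_left₀ (norm_nonneg _) (norm_nonneg _) two_ne_zero).1 h

theorem IsFermionOp.norm_le (ha : IsCAR a) {ψ : H} {X : 𝒜} (hX : IsFermionOp a ψ X) :
    ‖X‖ ≤ ‖ψ‖ := by
  rcases hX with rfl | rfl
  · exact ha.norm_le ψ
  · rw [norm_star]; exact ha.norm_le ψ

end CAR

section Evolution

open NormedSpace

variable {𝒜 : Type*} [NormedRing 𝒜] [StarRing 𝒜] [CStarRing 𝒜] [NormedAlgebra ℂ 𝒜]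
  [StarModule ℂ 𝒜] [CompleteSpace 𝒜]

/-- The Heisenberg dynamics `τ_t(A) = e^{itH} A e^{-itH}`. -/
noncomputable def evolution (H : selfAdjoint 𝒜) (t : ℝ) : 𝒜 ≃⋆ₐ[ℂ] 𝒜 :=
  Unitary.conjStarAlgAut ℂ 𝒜 (selfAdjoint.expUnitary (t • H))

theorem star_expUnitary (H : selfAdjoint 𝒜) :
    star (selfAdjoint.expUnitary H) = selfAdjoint.expUnitary (-H) := by
  ext
  simp [star_exp, star_smul]

theorem evolution_apply_eq_exp_smul (H : selfAdjoint 𝒜) (t : ℝ) (A : 𝒜) :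
    evolution H t A = exp (t • Complex.I • (H : 𝒜)) * A * exp (t • -(Complex.I • (H : 𝒜))) := by
  rw [evolution, Unitary.conjStarAlgAut_apply, ← Unitary.coe_star, star_expUnitary,
    selfAdjoint.expUnitary_coe, selfAdjoint.expUnitary_coe]
  simp only [NegMemClass.coe_neg, selfAdjoint.val_smul, smul_neg, smul_comm (t : ℝ) Complex.I]

theorem evolution_apply (H : selfAdjoint 𝒜) (t : ℝ) (A : 𝒜) :
    evolution H t A =
      exp ((Complex.I * t) • (H : 𝒜)) * A * exp (-((Complex.I * t) • (H : 𝒜))) := by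
  rw [evolution_apply_eq_exp_smul, smul_neg, mul_comm, mul_smul, Complex.coe_smul]

theorem evolution_symm (H : selfAdjoint 𝒜) (t : ℝ) :
    (evolution H t).symm = evolution H (-t) := by
  rw [evolution, Unitary.conjStarAlgAut_symm, star_expUnitary, evolution, neg_smul]

theorem evolution_zero (H : selfAdjoint 𝒜) (A : 𝒜) : evolution H 0 A = A := by
  simp [evolution]

theorem norm_evolution [Nontrivial 𝒜] (H : selfAdjoint 𝒜) (t : ℝ) (A : 𝒜) :
    ‖evolution H t A‖ = ‖A‖ := by
  rw [evolution, Unitary.conjStarAlgAut_apply, ← Unitary.coe_star, CStarRing.norm_mul_coe_unitary,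
    CStarRing.norm_coe_unitary_mul]

theorem norm_anticomm_evolution_neg [Nontrivial 𝒜] (H : selfAdjoint 𝒜) (t : ℝ) (X Y : 𝒜) :
    ‖evolution H t X * Y + Y * evolution H t X‖ =
      ‖evolution H (-t) Y * X + X * evolution H (-t) Y‖ := by
  rw [← norm_evolution H (-t), map_add, map_mul, map_mul, ← evolution_symm,
    StarAlgEquiv.symm_apply_apply, add_comm]

theorem hasDerivAt_evolution (H : selfAdjoint 𝒜) (A : 𝒜) (t : ℝ) :
    HasDerivAt (fun s => evolution H s A)
      (evolution H t (Complex.I • (H : 𝒜) * A - A * Complex.I • (H : 𝒜))) t := by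
  let : NormedAlgebra ℚ 𝒜 := NormedAlgebra.restrictScalars ℚ ℂ 𝒜
  set x := Complex.I • (H : 𝒜)
  have hcomm : x * exp (t • -x) = exp (t • -x) * x :=
    (((Commute.refl x).neg_right.smul_right t).exp_right).eq
  simp only [evolution_apply_eq_exp_smul]
  convert ((hasDerivAt_exp_smul_const x t).mul_const A).mul (hasDerivAt_exp_smul_const (-x) t)
    using 1
  · rfl
  rw [mul_neg, ← hcomm]
  noncomm_ring

end Evolution

theorem Real.exp_neg_mul_le_of_le {c x y : ℝ} (hc : 0 ≤ c) (h : x ≤ y) :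
    Real.exp (-c * y) ≤ Real.exp (-c * x) :=
  Real.exp_le_exp.2 (mul_le_mul_of_nonpos_left h (neg_nonpos.2 hc))

section Metric

variable {Γ : Type*} [MetricSpace Γ]

theorem distPtSet_nonneg (γ : Γ) (Z : Finset Γ) : 0 ≤ distPtSet γ Z := by
  unfold distPtSet
  split_ifs
  exacts [Finset.le_inf' _ _ fun _ _ => dist_nonneg, le_rfl]

theorem distPtSet_le_dist (γ : Γ) {Z : Finset Γ} {z : Γ} (hz : z ∈ Z) :
    distPtSet γ Z ≤ dist γ z := by
  rw [distPtSet, dif_pos ⟨z, hz⟩]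
  exact Finset.inf'_le _ hz

theorem distPtSet_singleton (γ γ' : Γ) : distPtSet γ {γ'} = dist γ γ' := by
  simp [distPtSet]

theorem diamSet_nonneg (Z : Finset Γ) : 0 ≤ diamSet Z := by
  unfold diamSet
  split_ifs with h
  · obtain ⟨z, hz⟩ := h
    exact (dist_self z).symm.le.trans
      ((Finset.le_sup' (dist z) hz).trans (Finset.le_sup' (fun z => Z.sup' _ (dist z)) hz))
  · exact le_rfl

theorem diamSet_singleton (γ : Γ) : diamSet ({γ} : Finset Γ) = 0 := by
  simp [diamSet]

theorem distSetSet_singleton_right {Z : Finset Γ} (hZ : Z.Nonempty) (γ : Γ) :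
    distSetSet Z {γ} = distPtSet γ Z := by
  rw [distSetSet, distPtSet, dif_pos ⟨hZ, Finset.singleton_nonempty γ⟩, dif_pos hZ]
  exact Finset.inf'_congr hZ rfl fun z _ => by simp [dist_comm]

end Metric

section Interaction

variable {H Γ 𝒜 : Type*}

def interactionMass (f : Finset Γ → ℕ → ℝ) (Λ : Finset Γ) : ℝ :=
  ∑ Z ∈ Λ.powerset, ∑ k ∈ Finset.Icc 1 Z.card, (k : ℝ) ^ 2 * f Z k

theorem interactionMass_nonneg {f : Finset Γ → ℕ → ℝ} (hf : ∀ Z k, 0 ≤ f Z k) (Λ : Finset Γ) :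
    0 ≤ interactionMass f Λ :=
  Finset.sum_nonneg fun Z _ => Finset.sum_nonneg fun k _ => mul_nonneg (sq_nonneg _) (hf Z k)

def hamiltonian [AddCommMonoid 𝒜] [Module ℂ 𝒜] [Star 𝒜] (f : Finset Γ → ℕ → ℝ)
    (M : Finset Γ → ℕ → 𝒜) (Λ : Finset Γ) : 𝒜 :=
  ∑ Z ∈ Λ.powerset, ∑ k ∈ Finset.Icc 1 Z.card, ((f Z k : ℝ) : ℂ) • (M Z k + star (M Z k))

theorem isSelfAdjoint_hamiltonian [NonUnitalRing 𝒜] [StarRing 𝒜] [Module ℂ 𝒜] [StarModule ℂ 𝒜]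
    (f : Finset Γ → ℕ → ℝ) (M : Finset Γ → ℕ → 𝒜) (Λ : Finset Γ) :
    IsSelfAdjoint (hamiltonian f M Λ) := by
  refine isSelfAdjoint_sum _ fun Z _ => isSelfAdjoint_sum _ fun k _ => ?_
  refine IsSelfAdjoint.smul (Complex.conj_ofReal _) ?_
  rw [IsSelfAdjoint, star_add, star_star, add_comm]

theorem commutator_I_smul_hamiltonian_eq_sum [Ring 𝒜] [StarRing 𝒜] [Algebra ℂ 𝒜]
    (f : Finset Γ → ℕ → ℝ) (M : Finset Γ → ℕ → 𝒜) (Λ : Finset Γ) (X : 𝒜) :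
    Complex.I • hamiltonian f M Λ * X - X * Complex.I • hamiltonian f M Λ =
      ∑ Z ∈ Λ.powerset, ∑ k ∈ Finset.Icc 1 Z.card, (Complex.I * f Z k) •
        ((M Z k + star (M Z k)) * X - X * (M Z k + star (M Z k))) := by
  simp only [hamiltonian, Finset.smul_sum, Finset.sum_mul, Finset.mul_sum, smul_mul_assoc,
    mul_smul_comm, smul_smul, ← Finset.sum_sub_distrib, ← smul_sub]

variable [NormedAddCommGroup H] [InnerProductSpace ℂ H] [MetricSpace Γ]

structure IsLocalizedFamily (χ : Γ → H) (G ξ : ℝ) : Prop where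
  norm_eq_one : ∀ γ, ‖χ γ‖ = 1
  norm_inner_le : ∀ γ γ', ‖(inner ℂ (χ γ) (χ γ') : ℂ)‖ ≤ G * Real.exp (-ξ * dist γ γ')

theorem IsFermionOp.norm_le_one [NormedRing 𝒜] [StarRing 𝒜] [CStarRing 𝒜] [NormedAlgebra ℂ 𝒜]
    {a : H → 𝒜} {χ : Γ → H} {G ξ : ℝ} (ha : IsCAR a) (hχ : IsLocalizedFamily χ G ξ) {γ : Γ}
    {X : 𝒜} (hX : IsFermionOp a (χ γ) X) : ‖X‖ ≤ 1 :=
  (hX.norm_le ha).trans (hχ.norm_eq_one γ).le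

/-- `Φ(Z) = Σ_k f_k(Z) (M_k(Z) + M_k(Z)*)` with `M_k(Z)` a product of `2k` operators `a_z^♯`,
`z ∈ Z`. -/
structure IsCARInteraction [Monoid 𝒜] [Star 𝒜] (a : H → 𝒜) (χ : Γ → H)
    (f : Finset Γ → ℕ → ℝ) (M : Finset Γ → ℕ → 𝒜) : Prop where
  nonneg : ∀ Z k, 0 ≤ f Z k
  exists_eq_prod : ∀ Z k, 1 ≤ k → k ≤ Z.card → ∃ l : List 𝒜, l.length = 2 * k ∧
    (∀ x ∈ l, ∃ z ∈ Z, IsFermionOp a (χ z) x) ∧ M Z k = l.prod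

/-- `C_Φ(ζ, ξ) ≤ CΦ`. -/
def InteractionNormLE (f : Finset Γ → ℕ → ℝ) (ν : ℕ) (ζ ξ CΦ : ℝ) : Prop :=
  ∀ (γ : Γ) (Z' : Finset Γ), Z'.Nonempty → ∃ s : ℝ,
    HasSum (fun Z : Finset Γ => ∑ k ∈ Finset.Icc 1 Z.card,
      (k : ℝ) ^ 2 * f Z k * (1 + diamSet Z) ^ ν *
        Real.exp (-(ζ * distPtSet γ Z)) * Real.exp (-(ξ * distSetSet Z Z'))) s ∧
    Real.exp (ζ * distPtSet γ Z') / (1 + diamSet Z') ^ ν * s ≤ CΦ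

section InteractionNorm

variable {f : Finset Γ → ℕ → ℝ} {ν : ℕ} {ζ ξ CΦ : ℝ}

theorem InteractionNormLE.nonneg (hC : InteractionNormLE f ν ζ ξ CΦ) (hf : ∀ Z k, 0 ≤ f Z k)
    (γ : Γ) : 0 ≤ CΦ := by
  obtain ⟨s, hs, hsC⟩ := hC γ {γ} (Finset.singleton_nonempty γ)
  have h0 : 0 ≤ s := hs.nonneg fun Z => Finset.sum_nonneg fun k _ => by
    have := hf Z k
    have := diamSet_nonneg Z
    positivity
  rw [distPtSet_singleton, diamSet_singleton, dist_self] at hsC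
  simp only [mul_zero, Real.exp_zero, add_zero, one_pow, div_one, one_mul] at hsC
  exact h0.trans hsC

theorem InteractionNormLE.sum_le (hC : InteractionNormLE f ν ζ ξ CΦ) (hf : ∀ Z k, 0 ≤ f Z k)
    (γ₀ γ₁ : Γ) (S : Finset (Finset Γ)) :
    ∑ Z ∈ S, ∑ k ∈ Finset.Icc 1 Z.card, (k : ℝ) ^ 2 * f Z k *
        Real.exp (-ξ * distPtSet γ₀ Z) * Real.exp (-ζ * distPtSet γ₁ Z) ≤
      CΦ * Real.exp (-ζ * dist γ₀ γ₁) := by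
  obtain ⟨s, hs, hsC⟩ := hC γ₁ {γ₀} (Finset.singleton_nonempty γ₀)
  rw [distPtSet_singleton, diamSet_singleton, add_zero, one_pow, div_one] at hsC
  have hle : ∀ Z ∈ S, ∑ k ∈ Finset.Icc 1 Z.card, (k : ℝ) ^ 2 * f Z k *
      Real.exp (-ξ * distPtSet γ₀ Z) * Real.exp (-ζ * distPtSet γ₁ Z) ≤
      ∑ k ∈ Finset.Icc 1 Z.card, (k : ℝ) ^ 2 * f Z k * (1 + diamSet Z) ^ ν *
        Real.exp (-(ζ * distPtSet γ₁ Z)) * Real.exp (-(ξ * distSetSet Z {γ₀})) := by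
    intro Z _
    rcases Z.eq_empty_or_nonempty with rfl | hZ
    · simp
    refine Finset.sum_le_sum fun k _ => ?_
    have hD : 1 ≤ (1 + diamSet Z) ^ ν := one_le_pow₀ (by linarith [diamSet_nonneg Z])
    have := hf Z k
    rw [distSetSet_singleton_right hZ, neg_mul, neg_mul]
    calc (k : ℝ) ^ 2 * f Z k * Real.exp (-(ξ * distPtSet γ₀ Z)) *
          Real.exp (-(ζ * distPtSet γ₁ Z))
        = (k : ℝ) ^ 2 * f Z k * 1 * Real.exp (-(ζ * distPtSet γ₁ Z)) *
          Real.exp (-(ξ * distPtSet γ₀ Z)) := by ring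
      _ ≤ _ := by gcongr
  have hsum := sum_le_hasSum S (fun Z _ => Finset.sum_nonneg fun k _ => by
    have := hf Z k
    have := diamSet_nonneg Z
    positivity) hs
  calc _ ≤ s := (Finset.sum_le_sum hle).trans hsum
    _ = Real.exp (-ζ * dist γ₀ γ₁) * (Real.exp (ζ * dist γ₁ γ₀) * s) := by
        rw [← mul_assoc, ← Real.exp_add, dist_comm]; simp
    _ ≤ CΦ * Real.exp (-ζ * dist γ₀ γ₁) := by
        rw [mul_comm CΦ]; gcongr

end InteractionNorm

end Interaction

section LocalEstimates

variable {H Γ 𝒜 F : Type*} [NormedAddCommGroup H] [InnerProductSpace ℂ H] [MetricSpace Γ]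
  [NormedRing 𝒜] [StarRing 𝒜] [CStarRing 𝒜] [NormedAlgebra ℂ 𝒜] [Nontrivial 𝒜]
  [FunLike F 𝒜 𝒜] [AlgHomClass F ℂ 𝒜 𝒜]
  {a : H → 𝒜} {χ : Γ → H} {G ξ : ℝ} {f : Finset Γ → ℕ → ℝ} {M : Finset Γ → ℕ → 𝒜}

theorem IsCARInteraction.norm_anticomm_map_commutator_term_le (ha : IsCAR a)
    (hχ : IsLocalizedFamily χ G ξ) (hΦ : IsCARInteraction a χ f M) (hG : 0 ≤ G) (hξ : 0 ≤ ξ)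
    (φ : F) (hφ : ∀ x, ‖φ x‖ ≤ ‖x‖) {γ₀ : Γ} {X : 𝒜} (hX : IsFermionOp a (χ γ₀) X) (Y : 𝒜)
    {Z : Finset Γ} {k : ℕ} (hk : k ∈ Finset.Icc 1 Z.card) {β : ℝ}
    (hβ : ∀ z ∈ Z, ∀ y, IsFermionOp a (χ z) y → ‖φ y * Y + Y * φ y‖ ≤ β) :
    ‖φ ((M Z k + star (M Z k)) * X - X * (M Z k + star (M Z k))) * Y +
        Y * φ ((M Z k + star (M Z k)) * X - X * (M Z k + star (M Z k)))‖ ≤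
      8 * k ^ 2 * (G * Real.exp (-ξ * distPtSet γ₀ Z)) * β := by
  obtain ⟨hk₁, hk₂⟩ := Finset.mem_Icc.1 hk
  obtain ⟨l, hlen, hl, hM⟩ := hΦ.exists_eq_prod Z k hk₁ hk₂
  have hmonomial : ∀ L : List 𝒜, L.length = 2 * k →
      (∀ x ∈ L, ∃ z ∈ Z, IsFermionOp a (χ z) x) →
      ‖φ (L.prod * X - X * L.prod) * Y + Y * φ (L.prod * X - X * L.prod)‖ ≤
        (2 * k) ^ 2 * (G * Real.exp (-ξ * distPtSet γ₀ Z)) * β := by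
    intro L hL hLZ
    have h := norm_anticomm_map_commutator_le φ X Y (hL ▸ even_two_mul k)
      (r := G * Real.exp (-ξ * distPtSet γ₀ Z)) (β := β)
      (fun x hx => by
        obtain ⟨z, -, hz⟩ := hLZ x hx
        exact (hφ x).trans (hz.norm_le_one ha hχ))
      (fun x hx => by
        obtain ⟨z, hzZ, hz⟩ := hLZ x hx
        obtain ⟨c, hc, hcle⟩ := hX.exists_anticomm_eq_smul_one ha hz
        refine ⟨c, hc, hcle.trans ((hχ.norm_inner_le γ₀ z).trans ?_)⟩
        exact mul_le_mul_of_nonneg_left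
          (Real.exp_neg_mul_le_of_le hξ (distPtSet_le_dist γ₀ hzZ)) hG)
      (fun x hx => by
        obtain ⟨z, hzZ, hz⟩ := hLZ x hx
        exact hβ z hzZ x hz)
    rwa [hL, Nat.cast_mul, Nat.cast_ofNat] at h
  have hstar : star (M Z k) = ((l.map star).reverse).prod := by
    rw [hM]; simpa [Function.comp_def] using unop_map_list_prod (starMulEquiv (R := 𝒜)) l
  have hl' : ∀ x ∈ (l.map star).reverse, ∃ z ∈ Z, IsFermionOp a (χ z) x := by
    intro x hx
    obtain ⟨y, hy, rfl⟩ := List.mem_map.1 (List.mem_reverse.1 hx)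
    obtain ⟨z, hzZ, hz⟩ := hl y hy
    exact ⟨z, hzZ, hz.star⟩
  have hsplit : ∀ A B : 𝒜, φ ((A + B) * X - X * (A + B)) * Y + Y * φ ((A + B) * X - X * (A + B)) =
      (φ (A * X - X * A) * Y + Y * φ (A * X - X * A)) +
        (φ (B * X - X * B) * Y + Y * φ (B * X - X * B)) := by
    intro A B
    simp only [map_sub, map_mul, map_add]
    noncomm_ring
  rw [hstar, hM, hsplit]
  calc _ ≤ _ := norm_add_le _ _
    _ ≤ (2 * k) ^ 2 * (G * Real.exp (-ξ * distPtSet γ₀ Z)) * β +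
        (2 * k) ^ 2 * (G * Real.exp (-ξ * distPtSet γ₀ Z)) * β :=
      add_le_add (hmonomial l hlen hl) (hmonomial _ (by simp [hlen]) hl')
    _ = _ := by ring


theorem IsCARInteraction.norm_anticomm_map_commutator_hamiltonian_le {ν : ℕ} {ζ CΦ : ℝ}
    (ha : IsCAR a) (hχ : IsLocalizedFamily χ G ξ) (hΦ : IsCARInteraction a χ f M)
    (hC : InteractionNormLE f ν ζ ξ CΦ) (hG : 0 ≤ G) (hζ : 0 ≤ ζ) (hξ : 0 ≤ ξ)
    (φ : F) (hφ : ∀ x, ‖φ x‖ ≤ ‖x‖) (Λ : Finset Γ) {γ₀ γ₁ : Γ} {X : 𝒜}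
    (hX : IsFermionOp a (χ γ₀) X) (Y : 𝒜) {S Q : ℝ} (hS : 0 ≤ S) (hQ : 0 ≤ Q)
    (hβ : ∀ z y, IsFermionOp a (χ z) y →
      ‖φ y * Y + Y * φ y‖ ≤ G * Real.exp (-ζ * dist z γ₁) * S + Q) :
    ‖φ (Complex.I • hamiltonian f M Λ * X - X * Complex.I • hamiltonian f M Λ) * Y +
        Y * φ (Complex.I • hamiltonian f M Λ * X - X * Complex.I • hamiltonian f M Λ)‖ ≤
      8 * G * CΦ * (G * Real.exp (-ζ * dist γ₀ γ₁) * S) + 8 * G * interactionMass f Λ * Q := by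
  have hterm : ∀ Z ∈ Λ.powerset, ∀ k ∈ Finset.Icc 1 Z.card,
      ‖(Complex.I * f Z k) • (φ ((M Z k + star (M Z k)) * X - X * (M Z k + star (M Z k))) * Y +
        Y * φ ((M Z k + star (M Z k)) * X - X * (M Z k + star (M Z k))))‖ ≤
      8 * G ^ 2 * S * ((k : ℝ) ^ 2 * f Z k *
          Real.exp (-ξ * distPtSet γ₀ Z) * Real.exp (-ζ * distPtSet γ₁ Z)) +
        8 * G * Q * ((k : ℝ) ^ 2 * f Z k) := by
    intro Z _ k hk
    have hf := hΦ.nonneg Z k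
    have hξZ : Real.exp (-ξ * distPtSet γ₀ Z) ≤ 1 := by
      simpa using Real.exp_neg_mul_le_of_le hξ (distPtSet_nonneg γ₀ Z)
    have hbound := hΦ.norm_anticomm_map_commutator_term_le ha hχ hG hξ φ hφ hX Y hk
      (β := G * Real.exp (-ζ * distPtSet γ₁ Z) * S + Q) fun z hz y hy =>
        (hβ z y hy).trans (by
          have := Real.exp_neg_mul_le_of_le hζ (distPtSet_le_dist γ₁ hz)
          rw [dist_comm] at this
          gcongr)
    rw [norm_smul, norm_mul, Complex.norm_I, one_mul, Complex.norm_real, Real.norm_of_nonneg hf]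
    calc _ ≤ f Z k * (8 * k ^ 2 * (G * Real.exp (-ξ * distPtSet γ₀ Z)) *
          (G * Real.exp (-ζ * distPtSet γ₁ Z) * S + Q)) := by gcongr
      _ = 8 * G ^ 2 * S * ((k : ℝ) ^ 2 * f Z k *
          Real.exp (-ξ * distPtSet γ₀ Z) * Real.exp (-ζ * distPtSet γ₁ Z)) +
          8 * G * Q * ((k : ℝ) ^ 2 * f Z k) * Real.exp (-ξ * distPtSet γ₀ Z) := by ring
      _ ≤ _ := add_le_add le_rfl (mul_le_of_le_one_right (by positivity) hξZ)
  rw [commutator_I_smul_hamiltonian_eq_sum]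
  simp only [map_sum, map_smul, Finset.sum_mul, Finset.mul_sum, smul_mul_assoc, mul_smul_comm,
    ← Finset.sum_add_distrib, ← smul_add]
  calc _ ≤ ∑ Z ∈ Λ.powerset, ∑ k ∈ Finset.Icc 1 Z.card,
        (8 * G ^ 2 * S * ((k : ℝ) ^ 2 * f Z k *
          Real.exp (-ξ * distPtSet γ₀ Z) * Real.exp (-ζ * distPtSet γ₁ Z)) +
        8 * G * Q * ((k : ℝ) ^ 2 * f Z k)) :=
        (norm_sum_le _ _).trans (Finset.sum_le_sum fun Z hZ =>
          (norm_sum_le _ _).trans (Finset.sum_le_sum fun k hk => hterm Z hZ k hk))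
    _ = 8 * G ^ 2 * S * ∑ Z ∈ Λ.powerset, ∑ k ∈ Finset.Icc 1 Z.card, (k : ℝ) ^ 2 * f Z k *
          Real.exp (-ξ * distPtSet γ₀ Z) * Real.exp (-ζ * distPtSet γ₁ Z) +
        8 * G * Q * interactionMass f Λ := by
      simp only [interactionMass, Finset.mul_sum, Finset.sum_add_distrib]
    _ ≤ 8 * G ^ 2 * S * (CΦ * Real.exp (-ζ * dist γ₀ γ₁)) + 8 * G * Q * interactionMass f Λ := by
      gcongr
      exact hC.sum_le hΦ.nonneg γ₀ γ₁ _
    _ = _ := by ring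

end LocalEstimates

section PicardBound

open Nat

/-- The `n`-th Picard iterate bound: a truncated exponential `c₀ e^{cs}` plus the remainder
`2 (Rs)^n / n!` coming from the trivial bound `2` on an anticommutator of contractions. -/
noncomputable def picardBound (c₀ c R : ℝ) (n : ℕ) (s : ℝ) : ℝ :=
  c₀ * ∑ j ∈ Finset.range n, (c * s) ^ j / j ! + 2 * ((R * s) ^ n / n !)

theorem hasDerivAt_pow_div_factorial (c : ℝ) (n : ℕ) (s : ℝ) :
    HasDerivAt (fun s => (c * s) ^ (n + 1) / (n + 1)!) (c * ((c * s) ^ n / n !)) s := by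
  refine ((((hasDerivAt_id s).const_mul c).pow (n + 1)).div_const ((n + 1)! : ℝ)).congr_deriv ?_
  rw [Nat.factorial_succ, id]
  push_cast
  field_simp

theorem hasDerivAt_picardBound_succ (c₀ c R : ℝ) (n : ℕ) (s : ℝ) :
    HasDerivAt (picardBound c₀ c R (n + 1))
      (c * (c₀ * ∑ j ∈ Finset.range n, (c * s) ^ j / j !) + R * (2 * ((R * s) ^ n / n !))) s := by
  have hsum : HasDerivAt (fun s => ∑ j ∈ Finset.range (n + 1), (c * s) ^ j / j !)
      (∑ j ∈ Finset.range n, c * ((c * s) ^ j / j !)) s := by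
    simp only [Finset.sum_range_succ' _ n, pow_zero, factorial_zero, cast_one, div_one]
    exact (HasDerivAt.fun_sum fun j _ => hasDerivAt_pow_div_factorial c j s).add_const 1
  refine ((hsum.const_mul c₀).add
    ((hasDerivAt_pow_div_factorial R n s).const_mul 2)).congr_deriv ?_
  rw [← Finset.mul_sum]
  ring

theorem picardBound_succ_zero (c₀ c R : ℝ) (n : ℕ) : picardBound c₀ c R (n + 1) 0 = c₀ := by
  simp [picardBound, Finset.sum_range_succ']

theorem le_mul_exp_of_forall_le_picardBound {c₀ c R s x : ℝ} (hc₀ : 0 ≤ c₀) (hcs : 0 ≤ c * s)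
    (h : ∀ n, x ≤ picardBound c₀ c R n s) : x ≤ c₀ * Real.exp (c * s) := by
  have hlim : Tendsto (fun n => c₀ * Real.exp (c * s) + 2 * ((R * s) ^ n / n !)) atTop
      (𝓝 (c₀ * Real.exp (c * s) + 2 * 0)) :=
    tendsto_const_nhds.add ((FloorSemiring.tendsto_pow_div_factorial_atTop (R * s)).const_mul 2)
  rw [mul_zero, add_zero] at hlim
  refine ge_of_tendsto hlim (Eventually.of_forall fun n => (h n).trans ?_)
  unfold picardBound
  gcongr
  exact Real.sum_le_exp_of_nonneg hcs n

end PicardBound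

section LiebRobinson

variable {H Γ 𝒜 : Type*} [NormedAddCommGroup H] [InnerProductSpace ℂ H] [MetricSpace Γ]
  [NormedRing 𝒜] [StarRing 𝒜] [CStarRing 𝒜] [NormedAlgebra ℂ 𝒜] [StarModule ℂ 𝒜]
  [CompleteSpace 𝒜] [Nontrivial 𝒜]
  {a : H → 𝒜} {χ : Γ → H} {G ξ : ℝ} {f : Finset Γ → ℕ → ℝ} {M : Finset Γ → ℕ → 𝒜}
  {ν : ℕ} {ζ CΦ : ℝ}

theorem norm_anticomm_evolution_le_picardBound (ha : IsCAR a) (hχ : IsLocalizedFamily χ G ξ)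
    (hΦ : IsCARInteraction a χ f M) (hC : InteractionNormLE f ν ζ ξ CΦ) (hG : 0 ≤ G)
    (hζ : 0 ≤ ζ) (hζξ : ζ ≤ ξ) {Λ : Finset Γ} {Hs : selfAdjoint 𝒜}
    (hH : (Hs : 𝒜) = hamiltonian f M Λ) {γ₁ : Γ} {Y : 𝒜} (hY : IsFermionOp a (χ γ₁) Y)
    (n : ℕ) : ∀ (γ₀ : Γ) (X : 𝒜), IsFermionOp a (χ γ₀) X → ∀ s, 0 ≤ s →
      ‖evolution Hs s X * Y + Y * evolution Hs s X‖ ≤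
        picardBound (G * Real.exp (-ζ * dist γ₀ γ₁)) (8 * G * CΦ)
          (8 * G * interactionMass f Λ) n s := by
  have hY1 : ‖Y‖ ≤ 1 := hY.norm_le_one ha hχ
  induction n with
  | zero =>
    intro γ₀ X hX s _
    have hX1 : ‖evolution Hs s X‖ ≤ 1 := by
      rw [norm_evolution]; exact hX.norm_le_one ha hχ
    calc _ ≤ ‖evolution Hs s X‖ * ‖Y‖ + ‖Y‖ * ‖evolution Hs s X‖ :=
          (norm_add_le _ _).trans (add_le_add (norm_mul_le _ _) (norm_mul_le _ _))
      _ ≤ 1 * 1 + 1 * 1 := by gcongr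
      _ = _ := by norm_num [picardBound]
  | succ n ih =>
    intro γ₀ X hX s hs
    set C := Complex.I • (Hs : 𝒜) * X - X * Complex.I • (Hs : 𝒜)
    have hderiv : ∀ u : ℝ, HasDerivAt (fun u => evolution Hs u X * Y + Y * evolution Hs u X)
        (evolution Hs u C * Y + Y * evolution Hs u C) u := fun u =>
      ((hasDerivAt_evolution Hs X u).mul_const Y).add ((hasDerivAt_evolution Hs X u).const_mul Y)
    have hinit : ‖X * Y + Y * X‖ ≤ G * Real.exp (-ζ * dist γ₀ γ₁) := by
      obtain ⟨c, hc, hcle⟩ := hX.exists_anticomm_eq_smul_one ha hY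
      rw [hc, norm_smul, norm_one, mul_one]
      exact hcle.trans ((hχ.norm_inner_le γ₀ γ₁).trans (mul_le_mul_of_nonneg_left
        (Real.exp_le_exp.2 (mul_le_mul_of_nonneg_right (neg_le_neg hζξ) dist_nonneg)) hG))
    refine image_norm_le_of_norm_deriv_right_le_deriv_boundary
      (fun u _ => (hderiv u).continuousAt.continuousWithinAt)
      (fun u _ => (hderiv u).hasDerivWithinAt)
      (by simpa [evolution_zero, picardBound_succ_zero] using hinit)
      (hasDerivAt_picardBound_succ _ _ _ n)
      (fun u hu => ?_) ⟨hs, le_rfl⟩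
    have hCΦ := hC.nonneg hΦ.nonneg γ₀
    have hmass := interactionMass_nonneg hΦ.nonneg Λ
    have hu₀ := hu.1
    simp only [C, hH]
    exact hΦ.norm_anticomm_map_commutator_hamiltonian_le ha hχ hC hG hζ (hζ.trans hζξ)
      (evolution Hs u) (fun x => (norm_evolution Hs u x).le) Λ hX Y
      (Finset.sum_nonneg fun j _ => by positivity) (by positivity)
      fun z y hy => ih z y hy u hu₀

theorem norm_anticomm_evolution_le (ha : IsCAR a) (hχ : IsLocalizedFamily χ G ξ)
    (hΦ : IsCARInteraction a χ f M) (hC : InteractionNormLE f ν ζ ξ CΦ) (hG : 0 ≤ G)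
    (hζ : 0 ≤ ζ) (hζξ : ζ ≤ ξ) {Λ : Finset Γ} {Hs : selfAdjoint 𝒜}
    (hH : (Hs : 𝒜) = hamiltonian f M Λ) (t : ℝ) {γ₀ γ₁ : Γ} {X Y : 𝒜}
    (hX : IsFermionOp a (χ γ₀) X) (hY : IsFermionOp a (χ γ₁) Y) :
    ‖evolution Hs t X * Y + Y * evolution Hs t X‖ ≤
      G * Real.exp (-ζ * dist γ₀ γ₁) * Real.exp (8 * G * CΦ * |t|) := by
  have hCΦ := hC.nonneg hΦ.nonneg γ₀
  have hforward : ∀ {γ₀ γ₁ : Γ} {X Y : 𝒜}, IsFermionOp a (χ γ₀) X → IsFermionOp a (χ γ₁) Y →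
      ∀ s, 0 ≤ s → ‖evolution Hs s X * Y + Y * evolution Hs s X‖ ≤
        G * Real.exp (-ζ * dist γ₀ γ₁) * Real.exp (8 * G * CΦ * s) :=
    fun hX hY s hs => le_mul_exp_of_forall_le_picardBound (by positivity) (by positivity)
      fun n => norm_anticomm_evolution_le_picardBound ha hχ hΦ hC hG hζ hζξ hH hY n _ _ hX s hs
  rcases le_or_gt 0 t with ht | ht
  · rw [abs_of_nonneg ht]
    exact hforward hX hY t ht
  · rw [norm_anticomm_evolution_neg, abs_of_neg ht, dist_comm]
    exact hforward hY hX (-t) (by linarith)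

end LiebRobinson

theorem stmt_6_general
    {H : Type*} [NormedAddCommGroup H] [InnerProductSpace ℂ H]
    {Γ : Type*} [MetricSpace Γ]
    (ξ : ℝ)
    (χ : Γ → H)
    (G : ℝ) (hG : 1 ≤ G)
    (hnorm : ∀ γ : Γ, ‖χ γ‖ = 1)
    (hloc : ∀ γ γ' : Γ, ‖(inner ℂ (χ γ) (χ γ') : ℂ)‖ ≤ G * Real.exp (-ξ * dist γ γ'))
    {𝒜 : Type*} [NormedRing 𝒜] [StarRing 𝒜] [CStarRing 𝒜] [NormedAlgebra ℂ 𝒜]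
    [StarModule ℂ 𝒜] [CompleteSpace 𝒜]
    (a : H → 𝒜)
    (hCAR1 : ∀ ψ φ : H, a ψ * star (a φ) + star (a φ) * a ψ = (inner ℂ ψ φ : ℂ) • 1)
    (hCAR2 : ∀ ψ φ : H, a ψ * a φ + a φ * a ψ = 0)
    (ν : ℕ)
    (f : Finset Γ → ℕ → ℝ) (hf0 : ∀ (Z : Finset Γ) (k : ℕ), 0 ≤ f Z k)
    (M : Finset Γ → ℕ → 𝒜)
    (hM : ∀ (Z : Finset Γ) (k : ℕ), 1 ≤ k → k ≤ Z.card → ∃ l : List 𝒜,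
      l.length = 2 * k ∧ (∀ x ∈ l, ∃ z ∈ Z, x = a (χ z) ∨ x = star (a (χ z))) ∧
        M Z k = l.prod)
    (ζ CΦ : ℝ) (hζ : 0 < ζ) (hζξ : ζ < ξ)
    (hC : ∀ (γ : Γ) (Z' : Finset Γ), Z'.Nonempty → ∃ s : ℝ,
      HasSum (fun Z : Finset Γ => ∑ k ∈ Finset.Icc 1 Z.card,
        (k : ℝ) ^ 2 * f Z k * (1 + diamSet Z) ^ ν *
          Real.exp (-(ζ * distPtSet γ Z)) * Real.exp (-(ξ * distSetSet Z Z'))) s ∧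
      Real.exp (ζ * distPtSet γ Z') / (1 + diamSet Z') ^ ν * s ≤ CΦ) :
    ∀ (Λ : Finset Γ) (t : ℝ) (γ γ' : Γ) (A₀ A₁ : 𝒜),
      (A₀ = a (χ γ) ∨ A₀ = star (a (χ γ))) →
      (A₁ = a (χ γ') ∨ A₁ = star (a (χ γ'))) →
      ∀ HΛ : 𝒜,
        HΛ = ∑ Z ∈ Λ.powerset, ∑ k ∈ Finset.Icc 1 Z.card,
          ((f Z k : ℝ) : ℂ) • (M Z k + star (M Z k)) →
        ‖NormedSpace.exp ((Complex.I * t) • HΛ) * A₀ *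
            NormedSpace.exp (-((Complex.I * t) • HΛ)) * A₁ +
          A₁ * (NormedSpace.exp ((Complex.I * t) • HΛ) * A₀ *
            NormedSpace.exp (-((Complex.I * t) • HΛ)))‖
          ≤ G * Real.exp (-ζ * (dist γ γ' - 16 * G * CΦ / ζ * |t|)) := by
  intro Λ t γ γ' A₀ A₁ h₀ h₁ HΛ hHΛ
  rcases subsingleton_or_nontrivial 𝒜 with _ | _
  · rw [Subsingleton.elim (_ + _ : 𝒜) 0, norm_zero]
    positivity
  have hCΦ : 0 ≤ CΦ := InteractionNormLE.nonneg hC hf0 γ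
  have h := norm_anticomm_evolution_le ⟨hCAR1, hCAR2⟩ ⟨hnorm, hloc⟩ ⟨hf0, hM⟩ hC
    (zero_le_one.trans hG) hζ.le hζξ.le (Hs := ⟨HΛ, hHΛ ▸ isSelfAdjoint_hamiltonian f M Λ⟩)
    hHΛ t h₀ h₁
  rw [evolution_apply] at h
  refine h.trans ?_
  rw [mul_assoc, ← Real.exp_add]
  gcongr
  have hv : ζ * (16 * G * CΦ / ζ * |t|) = 16 * G * CΦ * |t| := by field_simp
  nlinarith [mul_nonneg (mul_nonneg (zero_le_one.trans hG) hCΦ) (abs_nonneg t)]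

/-- **Lieb–Robinson bound.**  For a localized frame `{χ_γ}` with constant
`G` and rate `ξ`, and an interaction `Φ(Z) = Σ_k f_k(Z)(M_k(Z) + M_k(Z)^*)` on the CAR
algebra with `C_Φ(ζ,ξ) < ∞`, the finite-volume dynamics
`τ_t^Λ(A) = e^{itH_Λ} A e^{-itH_Λ}`, `H_Λ = Σ_{Z ⊆ Λ} Φ(Z)`, satisfies
`‖{τ_t^Λ(a_γ^♯), a_{γ'}^♯}‖ ≤ G e^{-ζ(d(γ,γ') - v|t|)}` with `v = 16 G C_Φ(ζ,ξ)/ζ`. -/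
theorem stmt_6
    {H : Type*} [NormedAddCommGroup H] [InnerProductSpace ℂ H] [CompleteSpace H]
    {Γ : Type*} [Countable Γ] [MetricSpace Γ]
    (hm : ∀ ε : ℝ, 0 < ε → ∃ C : ℝ, ∀ γ : Γ,
      ∃ s : ℝ, s ≤ C ∧ HasSum (fun ξ' : Γ => Real.exp (-ε * dist γ ξ')) s)
    (ξ : ℝ) (hξ : 0 < ξ)
    (χ : Γ → H) (A B : ℝ) (hA : 0 < A) (hAB : A ≤ B)
    (hframe : ∀ ψ : H, ∃ s : ℝ,
      HasSum (fun γ : Γ => ‖(inner ℂ (χ γ) ψ : ℂ)‖ ^ 2) s ∧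
        A * ‖ψ‖ ^ 2 ≤ s ∧ s ≤ B * ‖ψ‖ ^ 2)
    (G : ℝ) (hG : 1 ≤ G)
    (hnorm : ∀ γ : Γ, ‖χ γ‖ = 1)
    (hloc : ∀ γ γ' : Γ, ‖(inner ℂ (χ γ) (χ γ') : ℂ)‖ ≤ G * Real.exp (-ξ * dist γ γ'))
    {𝒜 : Type*} [NormedRing 𝒜] [StarRing 𝒜] [CStarRing 𝒜] [NormedAlgebra ℂ 𝒜]
    [StarModule ℂ 𝒜] [CompleteSpace 𝒜]
    (a : H → 𝒜)
    (hadd : ∀ ψ φ : H, a (ψ + φ) = a ψ + a φ)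
    (hsmul : ∀ (c : ℂ) (ψ : H), a (c • ψ) = (starRingEnd ℂ c) • a ψ)
    (hCAR1 : ∀ ψ φ : H, a ψ * star (a φ) + star (a φ) * a ψ = (inner ℂ ψ φ : ℂ) • 1)
    (hCAR2 : ∀ ψ φ : H, a ψ * a φ + a φ * a ψ = 0)
    (ν : ℕ)
    (f : Finset Γ → ℕ → ℝ) (hf0 : ∀ (Z : Finset Γ) (k : ℕ), 0 ≤ f Z k)
    (M : Finset Γ → ℕ → 𝒜)
    (hM : ∀ (Z : Finset Γ) (k : ℕ), 1 ≤ k → k ≤ Z.card → ∃ l : List 𝒜,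
      l.length = 2 * k ∧ (∀ x ∈ l, ∃ z ∈ Z, x = a (χ z) ∨ x = star (a (χ z))) ∧
        M Z k = l.prod)
    (ζ CΦ : ℝ) (hζ : 0 < ζ) (hζξ : ζ < ξ)
    (hC : ∀ (γ : Γ) (Z' : Finset Γ), Z'.Nonempty → ∃ s : ℝ,
      HasSum (fun Z : Finset Γ => ∑ k ∈ Finset.Icc 1 Z.card,
        (k : ℝ) ^ 2 * f Z k * (1 + diamSet Z) ^ ν *
          Real.exp (-(ζ * distPtSet γ Z)) * Real.exp (-(ξ * distSetSet Z Z'))) s ∧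
      Real.exp (ζ * distPtSet γ Z') / (1 + diamSet Z') ^ ν * s ≤ CΦ) :
    ∀ (Λ : Finset Γ) (t : ℝ) (γ γ' : Γ) (A₀ A₁ : 𝒜),
      (A₀ = a (χ γ) ∨ A₀ = star (a (χ γ))) →
      (A₁ = a (χ γ') ∨ A₁ = star (a (χ γ'))) →
      ∀ HΛ : 𝒜,
        HΛ = ∑ Z ∈ Λ.powerset, ∑ k ∈ Finset.Icc 1 Z.card,
          ((f Z k : ℝ) : ℂ) • (M Z k + star (M Z k)) →
        ‖NormedSpace.exp ((Complex.I * t) • HΛ) * A₀ *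
            NormedSpace.exp (-((Complex.I * t) • HΛ)) * A₁ +
          A₁ * (NormedSpace.exp ((Complex.I * t) • HΛ) * A₀ *
            NormedSpace.exp (-((Complex.I * t) • HΛ)))‖
          ≤ G * Real.exp (-ζ * (dist γ γ' - 16 * G * CΦ / ζ * |t|)) :=
  stmt_6_general ξ χ G hG hnorm hloc a hCAR1 hCAR2 ν f hf0 M hM ζ CΦ hζ hζξ hC
end

section
/- Let ω > 0, let W : ℝ²×ℝ² → ℝ and v : ℝ² → ℂ be measurable, and assume: (i) W(x,y) depends only on |x−y| and |W(x,y)| ≤ C₁·exp(−σ₁·|x−y|) for all x,y, and (ii) |v(x)| ≤ C₂·exp(−σ₂·|x|) for all x, with constants C₁, C₂, σ₁, σ₂ > 0. For γ₁,γ₂,γ₃,γ₄ ∈ ℝ² define w(γ₁,γ₂,γ₃,γ₄) := (π/(2ω²))² ∫_{ℝ²×ℝ²} exp(−2iω²·((γ₃−γ₄)∧x))·exp(−2iω²·((γ₁−γ₂)∧y))·W(x,y)·conj(v(x−γ₄))·v(x−γ₃)·conj(v(y−γ₂))·v(y−γ₁) dx dy (the integrand is absolutely integrable). Then |w(γ₁,γ₂,γ₃,γ₄)|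 ≤ K_σ·exp(−σ·diam{γ₁,γ₂,γ₃,γ₄}), where σ = min{σ₁/2, σ₂/6}, K_σ = π⁴·C₁·C₂⁴/(4·ω⁴·σ⁴), and diam{γ₁,γ₂,γ₃,γ₄} is the maximal pairwise Euclidean distance among γ₁,γ₂,γ₃,γ₄. -/
/-! The two phases have modulus one, so the integrand is bounded by
`|W(x,y)| |v(x-γ₄)| |v(x-γ₃)| |v(y-γ₂)| |v(y-γ₁)|`. By the triangle inequality every pairwise
distance of the `γᵢ` is at most `2|x-y| + |x-γ₃| + |x-γ₄| + |y-γ₁| + |y-γ₂|`, so part of the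
decay of `W` and `v` pays for `e^{-σ diam}` and what is left still dominates
`e^{-2σ|x-γ₃|} e^{-2σ|y-γ₁|}`. Its integral is `(2π/(2σ)²)²`, and
`(π/(2ω²))² (π/(2σ²))² = K_σ / 4`. -/

open MeasureTheory Metric Real

section ExpDecay

variable {E : Type*} [NormedAddCommGroup E] [NormedSpace ℝ E] [FiniteDimensional ℝ E]
  [Nontrivial E] [MeasurableSpace E] [BorelSpace E] (μ : Measure E) [μ.IsAddHaarMeasure]

lemma integral_exp_neg_mul_norm {a : ℝ} (ha : 0 < a) :
    ∫ x, exp (-a * ‖x‖) ∂μ =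
      μ.real (ball 0 1) * (Module.finrank ℝ E).factorial / a ^ Module.finrank ℝ E := by
  obtain ⟨m, hm⟩ : ∃ m, Module.finrank ℝ E = m + 1 :=
    Nat.exists_eq_add_one.mpr Module.finrank_pos
  have hradial : ∫ y in Set.Ioi (0 : ℝ), y ^ m * exp (-a * y) = m.factorial / a ^ (m + 1) := by
    have h := integral_rpow_mul_exp_neg_mul_Ioi (a := m + 1) (by positivity) ha
    rw [add_sub_cancel_right, Gamma_nat_eq_factorial, ← Nat.cast_succ, rpow_natCast,
      one_div, inv_pow, inv_mul_eq_div] at h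
    rw [← h]
    refine setIntegral_congr_fun measurableSet_Ioi fun y _ => ?_
    simp [rpow_natCast, neg_mul]
  rw [integral_fun_norm_addHaar μ (fun r => exp (-a * r)), hm, nsmul_eq_mul, smul_eq_mul,
    add_tsub_cancel_right]
  simp only [smul_eq_mul]
  rw [hradial, Nat.factorial_succ]
  push_cast
  ring

lemma integrable_exp_neg_mul_norm {a : ℝ} (ha : 0 < a) :
    Integrable (fun x => exp (-a * ‖x‖)) μ := by
  refine .of_integral_ne_zero ?_
  rw [integral_exp_neg_mul_norm μ ha]
  have : 0 < μ.real (ball 0 1) :=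
    ENNReal.toReal_pos (measure_ball_pos μ 0 one_pos).ne' measure_ball_lt_top.ne
  positivity

lemma norm_integral_prod_le_of_norm_le_exp_mul_exp {G : Type*} [NormedAddCommGroup G]
    [NormedSpace ℝ G] {F : E × E → G} {c a : ℝ} (ha : 0 < a) (γ γ' : E)
    (hF : ∀ x y, ‖F (x, y)‖ ≤ c * (exp (-a * ‖x - γ‖) * exp (-a * ‖y - γ'‖))) :
    ‖∫ p, F p ∂μ.prod μ‖ ≤ c * (∫ x, exp (-a * ‖x‖) ∂μ) ^ 2 := by
  have hexp := integrable_exp_neg_mul_norm μ ha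
  calc ‖∫ p, F p ∂μ.prod μ‖ ≤ ∫ p, ‖F p‖ ∂μ.prod μ := norm_integral_le_integral_norm _
    _ ≤ ∫ p, c * (exp (-a * ‖p.1 - γ‖) * exp (-a * ‖p.2 - γ'‖)) ∂μ.prod μ :=
      integral_mono_of_nonneg (.of_forall fun _ => norm_nonneg _)
        (((hexp.comp_sub_right γ).mul_prod (hexp.comp_sub_right γ')).const_mul c)
        (.of_forall fun p => hF p.1 p.2)
    _ = c * (∫ x, exp (-a * ‖x‖) ∂μ) ^ 2 := by
      rw [integral_const_mul,
        integral_prod_mul (fun x => exp (-a * ‖x - γ‖)) (fun y => exp (-a * ‖y - γ'‖)),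
        integral_sub_right_eq_self (fun x => exp (-a * ‖x‖)),
        integral_sub_right_eq_self (fun x => exp (-a * ‖x‖)), sq]

end ExpDecay

section Diameter

variable {E : Type*} [SeminormedAddCommGroup E]

def diam4 (γ₁ γ₂ γ₃ γ₄ : E) : ℝ :=
  max ‖γ₁ - γ₂‖ (max ‖γ₁ - γ₃‖ (max ‖γ₁ - γ₄‖ (max ‖γ₂ - γ₃‖ (max ‖γ₂ - γ₄‖ ‖γ₃ - γ₄‖))))

lemma diam4_le (x y γ₁ γ₂ γ₃ γ₄ : E) :
    diam4 γ₁ γ₂ γ₃ γ₄ ≤ 2 * ‖x - y‖ + (‖x - γ₃‖ + ‖x - γ₄‖ + ‖y - γ₁‖ + ‖y - γ₂‖) := by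
  simp only [diam4, ← dist_eq_norm]
  have h₁₂ := dist_triangle γ₁ y γ₂
  have h₃₄ := dist_triangle γ₃ x γ₄
  have h₁₃ := dist_triangle4 γ₁ y x γ₃
  have h₁₄ := dist_triangle4 γ₁ y x γ₄
  have h₂₃ := dist_triangle4 γ₂ y x γ₃
  have h₂₄ := dist_triangle4 γ₂ y x γ₄
  rw [dist_comm γ₁ y, dist_comm γ₂ y, dist_comm γ₃ x, dist_comm y x] at *
  refine max_le ?_ (max_le ?_ (max_le ?_ (max_le ?_ (max_le ?_ ?_)))) <;>
    linarith [dist_nonneg (x := x) (y := y), dist_nonneg (x := x) (y := γ₃),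
      dist_nonneg (x := x) (y := γ₄), dist_nonneg (x := y) (y := γ₁),
      dist_nonneg (x := y) (y := γ₂)]

lemma abs_mul_norm_le_of_exp_decay {W : E × E → ℝ} {v : E → ℂ} {C₁ C₂ σ₁ σ₂ σ : ℝ}
    (hC₁ : 0 ≤ C₁) (hC₂ : 0 ≤ C₂) (hσ : 0 ≤ σ) (hσ₁ : 2 * σ ≤ σ₁) (hσ₂ : 3 * σ ≤ σ₂)
    (hWdec : ∀ x y, |W (x, y)| ≤ C₁ * exp (-σ₁ * ‖x - y‖))
    (hvdec : ∀ x, ‖v x‖ ≤ C₂ * exp (-σ₂ * ‖x‖)) (x y γ₁ γ₂ γ₃ γ₄ : E) :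
    |W (x, y)| * ‖v (x - γ₄)‖ * ‖v (x - γ₃)‖ * ‖v (y - γ₂)‖ * ‖v (y - γ₁)‖ ≤
      C₁ * C₂ ^ 4 * exp (-σ * diam4 γ₁ γ₂ γ₃ γ₄) *
        (exp (-(2 * σ) * ‖x - γ₃‖) * exp (-(2 * σ) * ‖y - γ₁‖)) := by
  set d := ‖x - y‖
  set S := ‖x - γ₃‖ + ‖x - γ₄‖ + ‖y - γ₁‖ + ‖y - γ₂‖
  have hS : 0 ≤ S := by positivity
  have hexponent : -σ₁ * d + -σ₂ * ‖x - γ₄‖ + -σ₂ * ‖x - γ₃‖ + -σ₂ * ‖y - γ₂‖ + -σ₂ * ‖y - γ₁‖ ≤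
      -σ * diam4 γ₁ γ₂ γ₃ γ₄ + (-(2 * σ) * ‖x - γ₃‖ + -(2 * σ) * ‖y - γ₁‖) := by
    nlinarith [mul_le_mul_of_nonneg_left (diam4_le x y γ₁ γ₂ γ₃ γ₄) hσ,
      mul_le_mul_of_nonneg_right hσ₁ (norm_nonneg (x - y)), mul_le_mul_of_nonneg_right hσ₂ hS,
      mul_nonneg hσ (norm_nonneg (x - γ₄)), mul_nonneg hσ (norm_nonneg (y - γ₂))]
  calc |W (x, y)| * ‖v (x - γ₄)‖ * ‖v (x - γ₃)‖ * ‖v (y - γ₂)‖ * ‖v (y - γ₁)‖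
      ≤ (C₁ * exp (-σ₁ * d)) * (C₂ * exp (-σ₂ * ‖x - γ₄‖)) * (C₂ * exp (-σ₂ * ‖x - γ₃‖)) *
          (C₂ * exp (-σ₂ * ‖y - γ₂‖)) * (C₂ * exp (-σ₂ * ‖y - γ₁‖)) := by
        gcongr
        exacts [hWdec x y, hvdec _, hvdec _, hvdec _, hvdec _]
    _ = C₁ * C₂ ^ 4 * exp (-σ₁ * d + -σ₂ * ‖x - γ₄‖ + -σ₂ * ‖x - γ₃‖ + -σ₂ * ‖y - γ₂‖ +
          -σ₂ * ‖y - γ₁‖) := by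
        simp only [exp_add]
        ring
    _ ≤ C₁ * C₂ ^ 4 * exp (-σ * diam4 γ₁ γ₂ γ₃ γ₄ +
          (-(2 * σ) * ‖x - γ₃‖ + -(2 * σ) * ‖y - γ₁‖)) := by
        gcongr
    _ = _ := by rw [exp_add, exp_add]; ring

end Diameter

lemma integral_exp_neg_mul_norm_euclideanSpace_fin_two {a : ℝ} (ha : 0 < a) :
    ∫ x : EuclideanSpace ℝ (Fin 2), exp (-a * ‖x‖) = 2 * π / a ^ 2 := by
  rw [integral_exp_neg_mul_norm volume ha, finrank_euclideanSpace_fin, measureReal_def,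
    EuclideanSpace.volume_ball_fin_two]
  simp [Nat.factorial, pi_pos.le]
  ring

theorem stmt_8_general
    (ω C₁ C₂ σ₁ σ₂ : ℝ) (hω : 0 < ω) (hC₁ : 0 < C₁) (hC₂ : 0 < C₂)
    (hσ₁ : 0 < σ₁) (hσ₂ : 0 < σ₂)
    (W : EuclideanSpace ℝ (Fin 2) × EuclideanSpace ℝ (Fin 2) → ℝ)
    (v : EuclideanSpace ℝ (Fin 2) → ℂ)
    (hWdec : ∀ x y : EuclideanSpace ℝ (Fin 2), |W (x, y)| ≤ C₁ * Real.exp (-σ₁ * ‖x - y‖))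
    (hvdec : ∀ x : EuclideanSpace ℝ (Fin 2), ‖v x‖ ≤ C₂ * Real.exp (-σ₂ * ‖x‖))
    (γ₁ γ₂ γ₃ γ₄ : EuclideanSpace ℝ (Fin 2)) :
    ‖(((Real.pi / (2 * ω ^ 2)) ^ 2 : ℝ) : ℂ) *
        ∫ p : EuclideanSpace ℝ (Fin 2) × EuclideanSpace ℝ (Fin 2),
          Complex.exp (Complex.I *
            ((-2 * ω ^ 2 * ((γ₃ - γ₄) 0 * p.1 1 - (γ₃ - γ₄) 1 * p.1 0) : ℝ) : ℂ)) *
          Complex.exp (Complex.I *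
            ((-2 * ω ^ 2 * ((γ₁ - γ₂) 0 * p.2 1 - (γ₁ - γ₂) 1 * p.2 0) : ℝ) : ℂ)) *
          ((W (p.1, p.2) : ℝ) : ℂ) *
          (starRingEnd ℂ) (v (p.1 - γ₄)) * v (p.1 - γ₃) *
          (starRingEnd ℂ) (v (p.2 - γ₂)) * v (p.2 - γ₁)‖
      ≤ Real.pi ^ 4 * C₁ * C₂ ^ 4 / (4 * ω ^ 4 * min (σ₁ / 2) (σ₂ / 6) ^ 4) *
          Real.exp (-(min (σ₁ / 2) (σ₂ / 6)) *
            max ‖γ₁ - γ₂‖ (max ‖γ₁ - γ₃‖ (max ‖γ₁ - γ₄‖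
              (max ‖γ₂ - γ₃‖ (max ‖γ₂ - γ₄‖ ‖γ₃ - γ₄‖))))) := by
  set σ := min (σ₁ / 2) (σ₂ / 6)
  have hσ : 0 < σ := lt_min (by positivity) (by positivity)
  have hσ₁' : 2 * σ ≤ σ₁ := by linarith [min_le_left (σ₁ / 2) (σ₂ / 6)]
  have hσ₂' : 3 * σ ≤ σ₂ := by linarith [min_le_right (σ₁ / 2) (σ₂ / 6)]
  rw [norm_mul, Complex.norm_real, norm_of_nonneg (by positivity), Measure.volume_eq_prod]
  refine (mul_le_mul_of_nonneg_left (norm_integral_prod_le_of_norm_le_exp_mul_exp volume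
    (c := C₁ * C₂ ^ 4 * exp (-σ * diam4 γ₁ γ₂ γ₃ γ₄)) (by positivity : 0 < 2 * σ) γ₃ γ₁
    fun x y => ?_) (by positivity)).trans ?_
  · simp only [norm_mul, Complex.norm_exp_I_mul_ofReal, Complex.norm_real, Complex.norm_conj,
      one_mul, Real.norm_eq_abs]
    exact abs_mul_norm_le_of_exp_decay hC₁.le hC₂.le hσ.le hσ₁' hσ₂' hWdec hvdec x y γ₁ γ₂ γ₃ γ₄
  · rw [integral_exp_neg_mul_norm_euclideanSpace_fin_two (by positivity)]
    refine le_of_eq_of_le ?_ (div_le_self (by positivity) (by norm_num : (1 : ℝ) ≤ 4))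
    unfold diam4
    field_simp
    ring

/-- Exponential decay of the interaction kernel
`w(γ₁,γ₂,γ₃,γ₄)` obtained from an exponentially decaying radial pair potential `W` and an
exponentially localized profile `v`:
`|w(γ₁,γ₂,γ₃,γ₄)| ≤ K_σ e^{-σ diam{γ₁,γ₂,γ₃,γ₄}}` with `σ = min{σ₁/2, σ₂/6}` and
`K_σ = π⁴C₁C₂⁴/(4ω⁴σ⁴)`. -/
theorem stmt_8
    (ω C₁ C₂ σ₁ σ₂ : ℝ) (hω : 0 < ω) (hC₁ : 0 < C₁) (hC₂ : 0 < C₂)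
    (hσ₁ : 0 < σ₁) (hσ₂ : 0 < σ₂)
    (W : EuclideanSpace ℝ (Fin 2) × EuclideanSpace ℝ (Fin 2) → ℝ) (hWmeas : Measurable W)
    (v : EuclideanSpace ℝ (Fin 2) → ℂ) (hvmeas : Measurable v)
    (hWrad : ∀ x y x' y' : EuclideanSpace ℝ (Fin 2),
      ‖x - y‖ = ‖x' - y'‖ → W (x, y) = W (x', y'))
    (hWdec : ∀ x y : EuclideanSpace ℝ (Fin 2), |W (x, y)| ≤ C₁ * Real.exp (-σ₁ * ‖x - y‖))
    (hvdec : ∀ x : EuclideanSpace ℝ (Fin 2), ‖v x‖ ≤ C₂ * Real.exp (-σ₂ * ‖x‖))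
    (γ₁ γ₂ γ₃ γ₄ : EuclideanSpace ℝ (Fin 2)) :
    ‖(((Real.pi / (2 * ω ^ 2)) ^ 2 : ℝ) : ℂ) *
        ∫ p : EuclideanSpace ℝ (Fin 2) × EuclideanSpace ℝ (Fin 2),
          Complex.exp (Complex.I *
            ((-2 * ω ^ 2 * ((γ₃ - γ₄) 0 * p.1 1 - (γ₃ - γ₄) 1 * p.1 0) : ℝ) : ℂ)) *
          Complex.exp (Complex.I *
            ((-2 * ω ^ 2 * ((γ₁ - γ₂) 0 * p.2 1 - (γ₁ - γ₂) 1 * p.2 0) : ℝ) : ℂ)) *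
          ((W (p.1, p.2) : ℝ) : ℂ) *
          (starRingEnd ℂ) (v (p.1 - γ₄)) * v (p.1 - γ₃) *
          (starRingEnd ℂ) (v (p.2 - γ₂)) * v (p.2 - γ₁)‖
      ≤ Real.pi ^ 4 * C₁ * C₂ ^ 4 / (4 * ω ^ 4 * min (σ₁ / 2) (σ₂ / 6) ^ 4) *
          Real.exp (-(min (σ₁ / 2) (σ₂ / 6)) *
            max ‖γ₁ - γ₂‖ (max ‖γ₁ - γ₃‖ (max ‖γ₁ - γ₄‖
              (max ‖γ₂ - γ₃‖ (max ‖γ₂ - γ₄‖ ‖γ₃ - γ₄‖))))) :=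
  stmt_8_general ω C₁ C₂ σ₁ σ₂ hω hC₁ hC₂ hσ₁ hσ₂ W v hWdec hvdec γ₁ γ₂ γ₃ γ₄
end

section
/- Let Γ be a countable set with metric d such that m_ε := sup_{γ∈Γ} Σ_{ξ∈Γ} exp(−ε·d(γ,ξ)) < ∞ for every ε > 0, and fix λ > 0. Say a matrix A : Γ×Γ → ℂ belongs to 𝔐_λ if for every 0 < δ < λ there exists c_δ > 0 with |A(γ,γ')| ≤ c_δ·exp(−(λ−δ)·d(γ,γ')) for all γ,γ' ∈ Γ. If A, B ∈ 𝔐_λ, then for all γ, γ' ∈ Γ the series (A·B)(γ,γ') := Σ_{ξ∈Γ} A(γ,ξ)·B(ξ,γ') converges absolutely, and the product matrix A·B belongs to 𝔐_λ (as do all ℂ-linear combinations of A and B, so 𝔐_λ is an algebra over ℂ). -/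
/-- On a countable metric space `Γ` with `m_ε < ∞` for all `ε > 0`, the
class `𝔐_λ` of matrices `A : Γ×Γ → ℂ` satisfying, for every `0 < δ < λ`, a bound
`|A(γ,γ')| ≤ c_δ e^{-(λ-δ) d(γ,γ')}` is closed under (absolutely convergent) matrix
products and under ℂ-linear combinations, i.e. `𝔐_λ` is an algebra over `ℂ`. -/
theorem stmt_17
    {Γ : Type*} [Countable Γ] [MetricSpace Γ]
    (hm : ∀ ε : ℝ, 0 < ε → ∃ C : ℝ, ∀ γ : Γ,
      ∃ s : ℝ, s ≤ C ∧ HasSum (fun ξ : Γ => Real.exp (-ε * dist γ ξ)) s)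
    (lam : ℝ) (hlam : 0 < lam)
    (A B : Γ → Γ → ℂ)
    (hA : ∀ δ : ℝ, 0 < δ → δ < lam → ∃ c : ℝ, 0 < c ∧
      ∀ γ γ' : Γ, ‖A γ γ'‖ ≤ c * Real.exp (-(lam - δ) * dist γ γ'))
    (hB : ∀ δ : ℝ, 0 < δ → δ < lam → ∃ c : ℝ, 0 < c ∧
      ∀ γ γ' : Γ, ‖B γ γ'‖ ≤ c * Real.exp (-(lam - δ) * dist γ γ')) :
    (∀ γ γ' : Γ, Summable fun ξ : Γ => ‖A γ ξ * B ξ γ'‖) ∧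
    (∀ δ : ℝ, 0 < δ → δ < lam → ∃ c : ℝ, 0 < c ∧
      ∀ γ γ' : Γ, ‖∑' ξ : Γ, A γ ξ * B ξ γ'‖ ≤ c * Real.exp (-(lam - δ) * dist γ γ')) ∧
    (∀ z w : ℂ, ∀ δ : ℝ, 0 < δ → δ < lam → ∃ c : ℝ, 0 < c ∧
      ∀ γ γ' : Γ, ‖z * A γ γ' + w * B γ γ'‖ ≤ c * Real.exp (-(lam - δ) * dist γ γ')) := by
  -- key pointwise estimate for products
  have key : ∀ δ : ℝ, 0 < δ → δ < lam → ∃ cA cB : ℝ, 0 < cA ∧ 0 < cB ∧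
      ∀ γ γ' ξ : Γ, ‖A γ ξ * B ξ γ'‖ ≤
        (cA * cB * Real.exp (-(lam - δ) * dist γ γ')) * Real.exp (-(δ/2) * dist γ ξ) := by
    intro δ hδ hδlam
    obtain ⟨cA, hcA, hAb⟩ := hA (δ/2) (by linarith) (by linarith)
    obtain ⟨cB, hcB, hBb⟩ := hB (δ/2) (by linarith) (by linarith)
    refine ⟨cA, cB, hcA, hcB, fun γ γ' ξ => ?_⟩
    have h1 := hAb γ ξ
    have h2 := hBb ξ γ'
    have hd1 := dist_nonneg (x := γ) (y := ξ)
    have hd2 := dist_nonneg (x := ξ) (y := γ')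
    have htri := dist_triangle γ ξ γ'
    calc ‖A γ ξ * B ξ γ'‖ = ‖A γ ξ‖ * ‖B ξ γ'‖ := norm_mul _ _
      _ ≤ (cA * Real.exp (-(lam - δ/2) * dist γ ξ)) *
            (cB * Real.exp (-(lam - δ/2) * dist ξ γ')) := by
          apply mul_le_mul h1 h2 (norm_nonneg _)
          positivity
      _ = cA * cB * Real.exp (-(lam - δ/2) * dist γ ξ + -(lam - δ/2) * dist ξ γ') := by
          rw [Real.exp_add]; ring
      _ ≤ cA * cB * Real.exp (-(lam - δ) * dist γ γ' + -(δ/2) * dist γ ξ) := by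
          apply mul_le_mul_of_nonneg_left _ (by positivity)
          apply Real.exp_le_exp.mpr
          nlinarith [dist_nonneg (x := γ) (y := γ')]
      _ = (cA * cB * Real.exp (-(lam - δ) * dist γ γ')) * Real.exp (-(δ/2) * dist γ ξ) := by
          rw [Real.exp_add]; ring
  -- summability of the Gaussian-type weights
  have hsum : ∀ ε : ℝ, 0 < ε → ∃ C : ℝ, ∀ γ : Γ,
      Summable (fun ξ : Γ => Real.exp (-ε * dist γ ξ)) ∧
      (∑' ξ : Γ, Real.exp (-ε * dist γ ξ)) ≤ C := by
    intro ε hε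
    obtain ⟨C, hC⟩ := hm ε hε
    refine ⟨C, fun γ => ?_⟩
    obtain ⟨s, hsC, hs⟩ := hC γ
    exact ⟨hs.summable, hs.tsum_eq ▸ hsC⟩
  have part1 : ∀ γ γ' : Γ, Summable fun ξ : Γ => ‖A γ ξ * B ξ γ'‖ := by
    intro γ γ'
    obtain ⟨cA, cB, hcA, hcB, hk⟩ := key (lam/2) (by linarith) (by linarith)
    obtain ⟨C, hC⟩ := hsum (lam/2/2) (by linarith)
    exact Summable.of_nonneg_of_le (fun ξ => norm_nonneg _) (fun ξ => hk γ γ' ξ)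
      (((hC γ).1).mul_left _)
  refine ⟨part1, ?_, ?_⟩
  · intro δ hδ hδlam
    obtain ⟨cA, cB, hcA, hcB, hk⟩ := key δ hδ hδlam
    obtain ⟨C, hC⟩ := hsum (δ/2) (by linarith)
    refine ⟨cA * cB * max C 1, by positivity, fun γ γ' => ?_⟩
    have hS := (hC γ).1
    calc ‖∑' ξ : Γ, A γ ξ * B ξ γ'‖ ≤ ∑' ξ : Γ, ‖A γ ξ * B ξ γ'‖ :=
          norm_tsum_le_tsum_norm (part1 γ γ')
      _ ≤ ∑' ξ : Γ, (cA * cB * Real.exp (-(lam - δ) * dist γ γ')) *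
            Real.exp (-(δ/2) * dist γ ξ) :=
          Summable.tsum_le_tsum (fun ξ => hk γ γ' ξ) (part1 γ γ') (hS.mul_left _)
      _ = (cA * cB * Real.exp (-(lam - δ) * dist γ γ')) *
            ∑' ξ : Γ, Real.exp (-(δ/2) * dist γ ξ) := tsum_mul_left
      _ ≤ (cA * cB * Real.exp (-(lam - δ) * dist γ γ')) * max C 1 := by
          apply mul_le_mul_of_nonneg_left (le_trans (hC γ).2 (le_max_left _ _))
          positivity
      _ = cA * cB * max C 1 * Real.exp (-(lam - δ) * dist γ γ') := by ring
  · intro z w δ hδ hδlam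
    obtain ⟨cA, hcA, hAb⟩ := hA δ hδ hδlam
    obtain ⟨cB, hcB, hBb⟩ := hB δ hδ hδlam
    refine ⟨‖z‖ * cA + ‖w‖ * cB + 1, by positivity, fun γ γ' => ?_⟩
    have h1 := hAb γ γ'
    have h2 := hBb γ γ'
    have hexp : (0:ℝ) < Real.exp (-(lam - δ) * dist γ γ') := Real.exp_pos _
    calc ‖z * A γ γ' + w * B γ γ'‖ ≤ ‖z * A γ γ'‖ + ‖w * B γ γ'‖ := norm_add_le _ _
      _ = ‖z‖ * ‖A γ γ'‖ + ‖w‖ * ‖B γ γ'‖ := by rw [norm_mul, norm_mul]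
      _ ≤ ‖z‖ * (cA * Real.exp (-(lam - δ) * dist γ γ')) +
            ‖w‖ * (cB * Real.exp (-(lam - δ) * dist γ γ')) := by
          gcongr
      _ ≤ (‖z‖ * cA + ‖w‖ * cB + 1) * Real.exp (-(lam - δ) * dist γ γ') := by nlinarith
end

section
/- Let {χ_γ}_{γ∈Γ} be a localized frame in ℋ with constant G ≥ 1 and rate λ > 0, and let S be its frame operator. Then for every p ∈ ℕ₀ and all 0 < ε < δ < λ: |⟨χ_γ, S^p χ_{γ'}⟩| ≤ G·(G·m_ε)^p·exp(−(λ−δ)·d(γ,γ')) for all γ, γ' ∈ Γ, where m_ε = sup_{γ∈Γ} Σ_{ξ∈Γ} exp(−ε·d(γ,ξ)). -/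
/-!
Expanding `S` in the frame, `⟨χ_γ, S ψ⟩ = Σ_ξ ⟨χ_γ, χ_ξ⟩ ⟨χ_ξ, ψ⟩`. If `|⟨χ_ξ, ψ⟩|` decays like
`e^{-(λ-δ) d(ξ,γ')}`, the triangle inequality splits the decay `e^{-λ d(γ,ξ)}` of the Gram entries
into `e^{-ε d(γ,ξ)}`, which is summed to at most `m_ε`, and `e^{-(λ-δ) d(γ,ξ)}`, which recombines
with the decay in `ξ` into `e^{-(λ-δ) d(γ,γ')}`. So each application of `S` costs a factor `G m_ε`
while keeping the rate `λ - δ`, and induction on `p` gives the bound.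
-/

open Real

section Decay

variable {Γ : Type*} [PseudoMetricSpace Γ]

theorem exp_neg_mul_dist_mul_exp_neg_mul_dist_le_s18 {ε μ lam : ℝ} (hμ : 0 ≤ μ) (h : ε + μ ≤ lam)
    (γ ξ γ' : Γ) :
    exp (-lam * dist γ ξ) * exp (-μ * dist ξ γ') ≤ exp (-ε * dist γ ξ) * exp (-μ * dist γ γ') := by
  rw [← exp_add, ← exp_add, exp_le_exp]
  have := dist_triangle γ ξ γ'
  nlinarith [dist_nonneg (x := γ) (y := ξ)]

theorem norm_le_of_hasSum_mul_of_exp_decay {R : Type*} [NormedRing R] {a b : Γ → R} {z : R}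
    {γ γ' : Γ} {ε μ lam s C₁ C₂ : ℝ} (hz : HasSum (fun ξ => a ξ * b ξ) z)
    (hs : HasSum (fun ξ => exp (-ε * dist γ ξ)) s) (hμ : 0 ≤ μ) (h : ε + μ ≤ lam)
    (ha : ∀ ξ, ‖a ξ‖ ≤ C₁ * exp (-lam * dist γ ξ)) (hb : ∀ ξ, ‖b ξ‖ ≤ C₂ * exp (-μ * dist ξ γ')) :
    ‖z‖ ≤ C₁ * C₂ * s * exp (-μ * dist γ γ') := by
  have hg := (hs.mul_right (exp (-μ * dist γ γ'))).mul_left (C₁ * C₂)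
  refine (hz.norm_le_of_bounded hg fun ξ => ?_).trans_eq (by ring)
  have hC₁ : 0 ≤ C₁ := nonneg_of_mul_nonneg_left ((norm_nonneg _).trans (ha ξ)) (exp_pos _)
  have hC₂ : 0 ≤ C₂ := nonneg_of_mul_nonneg_left ((norm_nonneg _).trans (hb ξ)) (exp_pos _)
  calc ‖a ξ * b ξ‖ ≤ ‖a ξ‖ * ‖b ξ‖ := norm_mul_le _ _
    _ ≤ C₁ * exp (-lam * dist γ ξ) * (C₂ * exp (-μ * dist ξ γ')) :=
      mul_le_mul (ha ξ) (hb ξ) (norm_nonneg _) ((norm_nonneg _).trans (ha ξ))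
    _ = C₁ * C₂ * (exp (-lam * dist γ ξ) * exp (-μ * dist ξ γ')) := by ring
    _ ≤ C₁ * C₂ * (exp (-ε * dist γ ξ) * exp (-μ * dist γ γ')) :=
      mul_le_mul_of_nonneg_left (exp_neg_mul_dist_mul_exp_neg_mul_dist_le_s18 hμ h γ ξ γ')
        (mul_nonneg hC₁ hC₂)

end Decay

theorem hasSum_inner_mul_inner_of_hasSum_smul {𝕜 E ι : Type*} [RCLike 𝕜] [NormedAddCommGroup E]
    [InnerProductSpace 𝕜 E] {χ : ι → E} {ψ x : E}
    (hx : HasSum (fun ξ => (inner 𝕜 (χ ξ) ψ : 𝕜) • χ ξ) x) (φ : E) :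
    HasSum (fun ξ => (inner 𝕜 φ (χ ξ) : 𝕜) * inner 𝕜 (χ ξ) ψ) (inner 𝕜 φ x) := by
  simpa only [innerSL_apply_apply, inner_smul_right, mul_comm] using (innerSL 𝕜 φ).hasSum hx

theorem stmt_18_general
    {H : Type*} [NormedAddCommGroup H] [InnerProductSpace ℂ H]
    {Γ : Type*} [MetricSpace Γ]
    (mval : ℝ → ℝ)
    (hm : ∀ ε : ℝ, 0 < ε → ∀ γ : Γ,
      ∃ s : ℝ, s ≤ mval ε ∧ HasSum (fun ξ : Γ => Real.exp (-ε * dist γ ξ)) s)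
    (χ : Γ → H)
    (S : H →L[ℂ] H)
    (hS : ∀ ψ : H, HasSum (fun γ : Γ => (inner ℂ (χ γ) ψ : ℂ) • χ γ) (S ψ))
    (G lam : ℝ) (hG : 1 ≤ G)
    (hloc : ∀ γ γ' : Γ, ‖(inner ℂ (χ γ) (χ γ') : ℂ)‖ ≤ G * Real.exp (-lam * dist γ γ')) :
    ∀ (p : ℕ) (ε δ : ℝ), 0 < ε → ε < δ → δ < lam →
      ∀ γ γ' : Γ, ‖(inner ℂ (χ γ) ((S ^ p) (χ γ')) : ℂ)‖
        ≤ G * (G * mval ε) ^ p * Real.exp (-(lam - δ) * dist γ γ') := by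
  intro p ε δ hε hεδ hδ
  have hrate : 0 ≤ lam - δ := by linarith
  induction p with
  | zero =>
    intro γ γ'
    simpa using (hloc γ γ').trans (mul_le_mul_of_nonneg_left
      (exp_le_exp.2 (by nlinarith [dist_nonneg (x := γ) (y := γ')])) (by linarith))
  | succ p ih =>
    intro γ γ'
    obtain ⟨s, hs_le, hs⟩ := hm ε hε γ
    have hsum := hasSum_inner_mul_inner_of_hasSum_smul (hS ((S ^ p) (χ γ'))) (χ γ)
    have key := norm_le_of_hasSum_mul_of_exp_decay hsum hs hrate (by linarith) (hloc γ) (ih · γ')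
    have hG₀ : 0 ≤ G := by linarith
    have hm₀ : 0 ≤ mval ε := (hs.nonneg fun _ => (exp_pos _).le).trans hs_le
    rw [pow_succ', mul_apply_eq_comp]
    calc _ ≤ G * (G * (G * mval ε) ^ p) * s * exp (-(lam - δ) * dist γ γ') := key
      _ ≤ G * (G * (G * mval ε) ^ p) * mval ε * exp (-(lam - δ) * dist γ γ') := by
        gcongr
      _ = G * (G * mval ε) ^ (p + 1) * exp (-(lam - δ) * dist γ γ') := by ring

/-- For a localized frame `{χ_γ}` with constant `G ≥ 1` and rate
`λ > 0`, and frame operator `S`, the matrix elements of the powers of `S` satisfy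
`|⟨χ_γ, S^p χ_{γ'}⟩| ≤ G (G m_ε)^p e^{-(λ-δ) d(γ,γ')}` for all `p ∈ ℕ₀` and all
`0 < ε < δ < λ`, where `m_ε = sup_γ Σ_ξ e^{-ε d(γ,ξ)}`. -/
theorem stmt_18
    {H : Type*} [NormedAddCommGroup H] [InnerProductSpace ℂ H] [CompleteSpace H]
    {Γ : Type*} [Countable Γ] [MetricSpace Γ]
    (mval : ℝ → ℝ)
    (hm : ∀ ε : ℝ, 0 < ε → ∀ γ : Γ,
      ∃ s : ℝ, s ≤ mval ε ∧ HasSum (fun ξ : Γ => Real.exp (-ε * dist γ ξ)) s)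
    (χ : Γ → H) (A B : ℝ) (hA : 0 < A) (hAB : A ≤ B)
    (hframe : ∀ ψ : H, ∃ s : ℝ,
      HasSum (fun γ : Γ => ‖(inner ℂ (χ γ) ψ : ℂ)‖ ^ 2) s ∧
        A * ‖ψ‖ ^ 2 ≤ s ∧ s ≤ B * ‖ψ‖ ^ 2)
    (S : H →L[ℂ] H)
    (hS : ∀ ψ : H, HasSum (fun γ : Γ => (inner ℂ (χ γ) ψ : ℂ) • χ γ) (S ψ))
    (G lam : ℝ) (hG : 1 ≤ G) (hlam : 0 < lam)
    (hnorm : ∀ γ : Γ, ‖χ γ‖ = 1)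
    (hloc : ∀ γ γ' : Γ, ‖(inner ℂ (χ γ) (χ γ') : ℂ)‖ ≤ G * Real.exp (-lam * dist γ γ')) :
    ∀ (p : ℕ) (ε δ : ℝ), 0 < ε → ε < δ → δ < lam →
      ∀ γ γ' : Γ, ‖(inner ℂ (χ γ) ((S ^ p) (χ γ')) : ℂ)‖
        ≤ G * (G * mval ε) ^ p * Real.exp (-(lam - δ) * dist γ γ') :=
  stmt_18_general mval hm χ S hS G lam hG hloc
end
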